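/- arXiv:2404.03258 — 10 statements merged into one kernel-verified Lean document; each statement's English description precedes it below -/
import Mathlib

section
/- Let 0 < ρ < 1, β > 0, γ > 0, μ = ρ + ρ⁻¹ - 2, and H the operator on bounded real sequences given by Hξ(n) = (γ/β²)((-Δ_D ξ)(n) + μ ξ(n)) + (1-ρ^{2n})/(βn(1+ρ^{2n})) ξ(n), where (Δ_D ξ)(n) = ξ(n+1) + ξ(n-1) - 2ξ(n) for n ≥ 2 and (Δ_D ξ)(1) = ξ(2) - 2ξ(1). If ξ ∈ ℓ∞(ℕ, ℝ) satisfies Hξ(n) ≥ 0 for all n ∈ ℕ, then ξ(n) ≥ 0 for all n ∈ ℕ. -/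
/-- Comparison principle for the discrete Schrödinger operator
`H = (γ/β²)(-Δ_D + μI) + V` on bounded real sequences indexed by positive integers:
if `Hξ(n) ≥ 0` for all `n ≥ 1`, then `ξ(n) ≥ 0` for all `n ≥ 1`. -/
theorem stmt_4 (ρ β γ μ : ℝ) (hρ0 : 0 < ρ) (hρ1 : ρ < 1) (hβ : 0 < β) (hγ : 0 < γ)
    (hμ : μ = ρ + ρ⁻¹ - 2) (ξ : ℕ → ℝ)
    (hbdd : ∃ M : ℝ, ∀ n, |ξ n| ≤ M)
    (hH : ∀ n, 1 ≤ n →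
      0 ≤ γ / β ^ 2 *
            ((2 * ξ n - ξ (n + 1) - (if n = 1 then 0 else ξ (n - 1))) + μ * ξ n)
          + (1 - ρ ^ (2 * n)) / (β * (n : ℝ) * (1 + ρ ^ (2 * n))) * ξ n) :
    ∀ n, 1 ≤ n → 0 ≤ ξ n := by
  by_contra hcon
  push_neg at hcon
  obtain ⟨n0, hn0, hξn0⟩ := hcon
  obtain ⟨M, hM⟩ := hbdd
  have hρμ : ρ * μ = (1 - ρ) ^ 2 := by
    rw [hμ]; field_simp; ring
  have hμpos : 0 < μ := by
    have h2 : 0 < ρ * μ := by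
      rw [hρμ]; apply pow_pos; linarith
    nlinarith
  set A : Set ℝ := Set.range (fun k : ℕ => ξ (k + 1)) with hA
  have hAne : A.Nonempty := ⟨ξ 1, 0, rfl⟩
  have hAbdd : BddBelow A := by
    refine ⟨-M, ?_⟩
    rintro x ⟨k, rfl⟩
    have := (abs_le.mp (hM (k + 1))).1
    simpa using this
  set m := sInf A with hm
  have hmle : ∀ n, 1 ≤ n → m ≤ ξ n := by
    intro n hn
    apply csInf_le hAbdd
    exact ⟨n - 1, by simp [Nat.sub_add_cancel hn]⟩
  have hmneg : m < 0 := lt_of_le_of_lt (hmle n0 hn0) hξn0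
  set δ : ℝ := -μ * m / (2 * (2 + μ)) with hδ
  have h2μ : (0:ℝ) < 2 * (2 + μ) := by linarith
  have hδpos : 0 < δ := by
    apply div_pos _ h2μ
    nlinarith
  have hδeq : δ * (2 * (2 + μ)) = -μ * m := by
    rw [hδ]; field_simp
  obtain ⟨x, hxA, hxlt⟩ := Real.lt_sInf_add_pos hAne hδpos
  obtain ⟨k, rfl⟩ := hxA
  set n := k + 1 with hn
  have hn1 : 1 ≤ n := Nat.le_add_left 1 k
  have hξn : ξ n < m + δ := hxlt
  have hδltm : δ < -m := by
    rw [hδ, div_lt_iff₀ h2μ]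
    nlinarith
  have hξneg : ξ n < 0 := by linarith
  have hV : 0 ≤ (1 - ρ ^ (2 * n)) / (β * (n : ℝ) * (1 + ρ ^ (2 * n))) := by
    apply div_nonneg
    · have : ρ ^ (2 * n) < 1 := pow_lt_one₀ hρ0.le hρ1 (by omega)
      linarith
    · have hncast : (0:ℝ) < (n : ℝ) := by exact_mod_cast Nat.pos_of_ne_zero (by omega)
      have hpow : (0:ℝ) < 1 + ρ ^ (2 * n) := by positivity
      exact (mul_pos (mul_pos hβ hncast) hpow).le
  have h := hH n hn1
  have hVξ : (1 - ρ ^ (2 * n)) / (β * (n : ℝ) * (1 + ρ ^ (2 * n))) * ξ n ≤ 0 :=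
    mul_nonpos_iff.mpr (Or.inl ⟨hV, hξneg.le⟩)
  have hc : 0 < γ / β ^ 2 := by positivity
  have hE : 0 ≤ (2 * ξ n - ξ (n + 1) - (if n = 1 then 0 else ξ (n - 1))) + μ * ξ n := by
    by_contra hneg
    push_neg at hneg
    nlinarith [mul_pos hc (neg_pos.mpr hneg)]
  have hnext : m ≤ ξ (n + 1) := hmle (n + 1) (by omega)
  have hc_ge : m ≤ (if n = 1 then 0 else ξ (n - 1)) := by
    split
    · linarith
    · exact hmle _ (by omega)
  have hprod : 0 < μ * (m + δ - ξ n) := mul_pos hμpos (by linarith)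
  nlinarith [hE, hnext, hc_ge, hprod, hδeq, mul_neg_of_pos_of_neg hμpos hmneg]
end

section
/- Let r, ε > 0, ρ = (√(4r+ε) - √ε)/(√(4r+ε) + √ε), β = √(ε(4r+ε)). Consider the Möbius transform T(z) = β/(z - β/2) + 1 on the extended complex plane. Then T maps the disk B_r(-r - ε/2) onto the disk B_ρ(0), and maps the disk B_r(r + ε/2) onto the complement of the closed disk of radius ρ⁻¹ centered at 0 (in the Riemann sphere). -/
private lemma sq_lt_iff' (u v : ℝ) (hu : 0 ≤ u) (hv : 0 ≤ v) : u < v ↔ u^2 < v^2 :=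
  ⟨fun h => by nlinarith, fun h => by nlinarith⟩

private lemma disk1 (a b x y : ℝ) (hb : 0 < b) (hba : b < a) :
    (x + a*b/2)^2 + y^2 < ((a-b)/(a+b))^2 * ((x - a*b/2)^2 + y^2)
      ↔ (x + (a^2+b^2)/4)^2 + y^2 < ((a^2-b^2)/4)^2 := by
  have h0 : 0 < a + b := by linarith
  have h2 : (0:ℝ) < (a+b)^2 := by positivity
  have hab : 0 < a*b := by nlinarith
  rw [div_pow, div_mul_eq_mul_div, lt_div_iff₀ h2]
  have key : ((x + a*b/2)^2 + y^2)*(a+b)^2 - (a-b)^2*((x - a*b/2)^2+y^2)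
      = 4*(a*b)*(((x+(a^2+b^2)/4)^2 + y^2) - ((a^2-b^2)/4)^2) := by ring
  constructor <;> intro h <;> nlinarith [key, hab, h]

private lemma disk2 (a b x y : ℝ) (hb : 0 < b) (hba : b < a) :
    (x - a*b/2)^2 + y^2 < ((a-b)/(a+b))^2 * ((x + a*b/2)^2 + y^2)
      ↔ (x - (a^2+b^2)/4)^2 + y^2 < ((a^2-b^2)/4)^2 := by
  have := disk1 a b (-x) y hb hba
  constructor <;> intro h
  · have h' : (-x + a*b/2)^2 + y^2 < ((a-b)/(a+b))^2 * ((-x - a*b/2)^2 + y^2) := by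
      ring_nf at h ⊢; linarith
    have := this.mp h'
    nlinarith [this]
  · have h' : (-x + (a^2+b^2)/4)^2 + y^2 < ((a^2-b^2)/4)^2 := by nlinarith
    have := this.mpr h'
    ring_nf at this ⊢; linarith

/-- The Möbius transform `T(z) = β/(z - β/2) + 1` maps the disk `B_r(-r - ε/2)` onto
`B_ρ(0)` and maps `B_r(r + ε/2)` onto the complement of the closed disk of radius
`ρ⁻¹` centered at `0` in the Riemann sphere; equivalently, on `ℂ` it maps
`B_r(r + ε/2)` minus the pole `β/2` (which is sent to `∞`) onto `{|w| > ρ⁻¹}`. -/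
theorem stmt_7 (r ε : ℝ) (hr : 0 < r) (hε : 0 < ε) (ρ β : ℝ)
    (hρ : ρ = (Real.sqrt (4 * r + ε) - Real.sqrt ε) / (Real.sqrt (4 * r + ε) + Real.sqrt ε))
    (hβ : β = Real.sqrt (ε * (4 * r + ε)))
    (T : ℂ → ℂ) (hT : ∀ z : ℂ, T z = (β : ℂ) / (z - (β : ℂ) / 2) + 1) :
    T '' Metric.ball (-(r + ε / 2) : ℂ) r = Metric.ball (0 : ℂ) ρ ∧
    T '' (Metric.ball ((r + ε / 2) : ℂ) r \ {(β : ℂ) / 2}) =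
      {w : ℂ | ρ⁻¹ < ‖w‖} := by
  set a := Real.sqrt (4*r+ε) with ha_def
  set b := Real.sqrt ε with hb_def
  have ha2 : a^2 = 4*r+ε := Real.sq_sqrt (by linarith)
  have hb2 : b^2 = ε := Real.sq_sqrt hε.le
  have ha0 : 0 < a := Real.sqrt_pos.mpr (by linarith)
  have hb0 : 0 < b := Real.sqrt_pos.mpr hε
  have hba : b < a := by
    rw [ha_def, hb_def]
    exact Real.sqrt_lt_sqrt hε.le (by linarith)
  have hβab : β = a*b := by
    rw [hβ, ha_def, hb_def, Real.sqrt_mul hε.le, mul_comm]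
  have hβ0 : 0 < β := by rw [hβab]; positivity
  have hρab : ρ = (a-b)/(a+b) := by rw [hρ]
  have hρ0 : 0 < ρ := hρab ▸ div_pos (by linarith) (by linarith)
  have hρ1 : ρ < 1 := by rw [hρab, div_lt_one (by linarith)]; linarith
  have hM : r + ε/2 = (a^2+b^2)/4 := by rw [ha2, hb2]; ring
  have hr4 : r = (a^2-b^2)/4 := by rw [ha2, hb2]; ring
  have hTalt : ∀ z : ℂ, z ≠ (β:ℂ)/2 → T z = (z + (β:ℂ)/2)/(z - (β:ℂ)/2) := by
    intro z hz
    have hzc : z - (β:ℂ)/2 ≠ 0 := sub_ne_zero.mpr hz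
    rw [hT, div_add' _ _ _ hzc]
    congr 1
    ring
  have hsub : ∀ z : ℂ, z - (-(r + ε / 2) : ℂ) = z + ((r + ε/2 : ℝ) : ℂ) := by
    intro z; push_cast; ring
  have mem1 : ∀ z : ℂ,
      (‖z + (β:ℂ)/2‖ < ρ * ‖z - (β:ℂ)/2‖ ↔
        z ∈ Metric.ball (-(r + ε / 2) : ℂ) r) := by
    intro z
    rw [Metric.mem_ball, Complex.dist_eq, hsub,
      sq_lt_iff' _ _ (norm_nonneg _) (by positivity),
      sq_lt_iff' _ _ (norm_nonneg _) hr.le,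
      mul_pow, Complex.sq_norm, Complex.sq_norm, Complex.sq_norm]
    simp only [Complex.normSq_apply, Complex.add_re, Complex.add_im, Complex.sub_re,
      Complex.sub_im, Complex.ofReal_re, Complex.ofReal_im, Complex.div_ofNat_re,
      Complex.div_ofNat_im, Complex.ofReal_re]
    rw [hβab, hρab, hM, hr4]
    have h1 := disk1 a b z.re z.im hb0 hba
    ring_nf at h1 ⊢
    exact h1
  have mem2 : ∀ z : ℂ,
      (‖z - (β:ℂ)/2‖ < ρ * ‖z + (β:ℂ)/2‖ ↔
        z ∈ Metric.ball ((r + ε / 2) : ℂ) r) := by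
    intro z
    have hsub2 : z - ((r + ε / 2) : ℂ) = z - ((r + ε/2 : ℝ) : ℂ) := by push_cast; ring
    rw [Metric.mem_ball, Complex.dist_eq, hsub2,
      sq_lt_iff' _ _ (norm_nonneg _) (by positivity),
      sq_lt_iff' _ _ (norm_nonneg _) hr.le,
      mul_pow, Complex.sq_norm, Complex.sq_norm, Complex.sq_norm]
    simp only [Complex.normSq_apply, Complex.add_re, Complex.add_im, Complex.sub_re,
      Complex.sub_im, Complex.ofReal_re, Complex.ofReal_im, Complex.div_ofNat_re,
      Complex.div_ofNat_im, Complex.ofReal_re]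
    rw [hβab, hρab, hM, hr4]
    have h1 := disk2 a b z.re z.im hb0 hba
    ring_nf at h1 ⊢
    exact h1
  constructor
  · ext w
    simp only [Set.mem_image, Metric.mem_ball, Complex.dist_eq, sub_zero]
    constructor
    · rintro ⟨z, hz, rfl⟩
      have hz' := (mem1 z).mpr (by rwa [Metric.mem_ball, Complex.dist_eq])
      have hzne : z ≠ (β:ℂ)/2 := by
        intro hzz
        rw [hsub z, hzz] at hz
        have : (β:ℂ)/2 + ((r + ε/2 : ℝ) : ℂ) = ((β/2 + (r + ε/2) : ℝ) : ℂ) := by push_cast; ring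
        rw [this, Complex.norm_real, Real.norm_eq_abs, abs_of_pos (by linarith)] at hz
        linarith
      have hd : (0:ℝ) < ‖z - (β:ℂ)/2‖ :=
        norm_pos_iff.mpr (sub_ne_zero.mpr hzne)
      rw [hTalt z hzne, norm_div, div_lt_iff₀ hd]
      exact hz'
    · intro hw
      have hw1 : w ≠ 1 := by
        intro h1; rw [h1] at hw; simp at hw; linarith
      have hw1' : w - 1 ≠ 0 := sub_ne_zero.mpr hw1
      have hzc : (β:ℂ)/2 * (w+1)/(w-1) - (β:ℂ)/2 = (β:ℂ)/(w-1) := by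
        field_simp; ring
      have hβc : (β:ℂ) ≠ 0 := by exact_mod_cast hβ0.ne'
      have hzc0 : (β:ℂ)/2 * (w+1)/(w-1) - (β:ℂ)/2 ≠ 0 := by
        rw [hzc]; exact div_ne_zero hβc hw1'
      have hzne : (β:ℂ)/2 * (w+1)/(w-1) ≠ (β:ℂ)/2 := fun h => hzc0 (by rw [h]; ring)
      have hTz : T ((β:ℂ)/2 * (w+1)/(w-1)) = w := by
        rw [hT, hzc, div_div_eq_mul_div, mul_comm, mul_div_assoc, div_self hβc,
          mul_one, sub_add_cancel]
      refine ⟨(β:ℂ)/2 * (w+1)/(w-1), ?_, hTz⟩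
      have hd : (0:ℝ) < ‖(β:ℂ)/2 * (w+1)/(w-1) - (β:ℂ)/2‖ :=
        norm_pos_iff.mpr hzc0
      have habs : ‖(β:ℂ)/2 * (w+1)/(w-1) + (β:ℂ)/2‖
          < ρ * ‖(β:ℂ)/2 * (w+1)/(w-1) - (β:ℂ)/2‖ := by
        rw [← div_lt_iff₀ hd, ← norm_div, ← hTalt _ hzne, hTz]
        exact hw
      have hball := (mem1 _).mp habs
      simpa [Metric.mem_ball, Complex.dist_eq] using hball
  · ext w
    simp only [Set.mem_image, Set.mem_diff, Set.mem_singleton_iff, Set.mem_setOf_eq]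
    constructor
    · rintro ⟨z, ⟨hz, hzne⟩, rfl⟩
      have hd : (0:ℝ) < ‖z - (β:ℂ)/2‖ :=
        norm_pos_iff.mpr (sub_ne_zero.mpr hzne)
      have h2 := (mem2 z).mpr hz
      rw [hTalt z hzne, norm_div, lt_div_iff₀ hd]
      have := mul_lt_mul_of_pos_left h2 (inv_pos.mpr hρ0)
      rwa [inv_mul_cancel_left₀ hρ0.ne'] at this
    · intro hw
      have hinv : 1 < ρ⁻¹ := by
        have h := inv_strictAnti₀ hρ0 hρ1
        simpa using h
      have hw1 : w ≠ 1 := by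
        intro h1; rw [h1] at hw; simp at hw; linarith
      have hw1' : w - 1 ≠ 0 := sub_ne_zero.mpr hw1
      have hq : (0:ℝ) < ‖w - 1‖ := norm_pos_iff.mpr hw1'
      have hzc : (β:ℂ)/2 * (w+1)/(w-1) - (β:ℂ)/2 = (β:ℂ)/(w-1) := by
        field_simp; ring
      have hzpc : (β:ℂ)/2 * (w+1)/(w-1) + (β:ℂ)/2 = (β:ℂ)*w/(w-1) := by
        field_simp; ring
      have hβc : (β:ℂ) ≠ 0 := by exact_mod_cast hβ0.ne'
      have hzc0 : (β:ℂ)/2 * (w+1)/(w-1) - (β:ℂ)/2 ≠ 0 := by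
        rw [hzc]; exact div_ne_zero hβc hw1'
      have hzne : (β:ℂ)/2 * (w+1)/(w-1) ≠ (β:ℂ)/2 := fun h => hzc0 (by rw [h]; ring)
      have hTz : T ((β:ℂ)/2 * (w+1)/(w-1)) = w := by
        rw [hT, hzc, div_div_eq_mul_div, mul_comm, mul_div_assoc, div_self hβc,
          mul_one, sub_add_cancel]
      refine ⟨(β:ℂ)/2 * (w+1)/(w-1), ⟨(mem2 _).mp ?_, hzne⟩, hTz⟩
      have habsβ : ‖(β:ℂ)‖ = β := by
        rw [Complex.norm_real, Real.norm_eq_abs, abs_of_pos hβ0]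
      have hw' : 1 < ρ * ‖w‖ := by
        have := mul_lt_mul_of_pos_left hw hρ0
        rwa [mul_inv_cancel₀ hρ0.ne'] at this
      rw [hzc, hzpc, norm_div, norm_div, norm_mul, habsβ]
      rw [div_lt_iff₀ hq, ← mul_div_assoc, div_mul_cancel₀ _ hq.ne']
      nlinarith [hw', hβ0]
end

section
/- Let 0 < ρ < 1, β > 0, γ > 0 with (ρ⁻¹ - ρ)/β = 1/r for r > 0. Suppose a : ℕ → ℝ is a bounded sequence satisfying (γ/β²)(-Δ_D a + μa)(n) + (1-ρ^{2n})/(βn(1+ρ^{2n})) a(n) = 2ρⁿ/(1+ρ^{2n}) for all n ≥ 1, where μ = ρ + ρ⁻¹ - 2. If γ = r, then a(n) = B₁ β n ρⁿ for all n, where B₁ = 2(1 + γ/r)⁻¹ = 1. -/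
lemma aux_npow (ρ : ℝ) (h0 : 0 < ρ) (h1 : ρ < 1) (n : ℕ) : (n : ℝ) * ρ ^ n ≤ 1 / (1 - ρ) := by
  have h : (n : ℝ) * ρ ^ n ≤ ∑ k ∈ Finset.range n, ρ ^ k := by
    calc (n : ℝ) * ρ ^ n = ∑ _k ∈ Finset.range n, ρ ^ n := by
          rw [Finset.sum_const, Finset.card_range, nsmul_eq_mul]
      _ ≤ ∑ k ∈ Finset.range n, ρ ^ k := by
          apply Finset.sum_le_sum
          intro k hk
          exact pow_le_pow_of_le_one (le_of_lt h0) (le_of_lt h1) (le_of_lt (Finset.mem_range.mp hk))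
  have h2 : ∑ k ∈ Finset.range n, ρ ^ k = (1 - ρ ^ n) / (1 - ρ) := by
    rw [geom_sum_eq (ne_of_lt h1)]
    rw [div_eq_div_iff (by linarith) (by linarith)]
    ring
  have h3 : (1 - ρ ^ n) / (1 - ρ) ≤ 1 / (1 - ρ) := by
    gcongr
    · linarith [pow_nonneg h0.le n]
  linarith

lemma aux_growth (ρ : ℝ) (hρ0 : 0 < ρ) (B : ℕ → ℝ) (hB0 : B 0 = 0) (hB1 : 0 < B 1)
    (hrec : ∀ m : ℕ, ∃ k : ℝ, ρ + ρ⁻¹ ≤ k ∧ B (m+2) = k * B (m+1) - B m) :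
    ∀ m : ℕ, ρ⁻¹ ^ m * B 1 ≤ B (m+1) := by
  have hinv : 0 < ρ⁻¹ := inv_pos.mpr hρ0
  have key : ∀ m : ℕ, 0 < B (m+1) ∧ ρ⁻¹ * B (m+1) ≤ B (m+2) ∧ ρ⁻¹ ^ m * B 1 ≤ B (m+1) := by
    intro m
    induction m with
    | zero =>
      refine ⟨hB1, ?_, by simp⟩
      obtain ⟨k, hk, hEq⟩ := hrec 0
      rw [hEq, hB0]
      nlinarith
    | succ n ih =>
      obtain ⟨h1, h2, h3⟩ := ih
      have h4 : 0 < B (n+2) := lt_of_lt_of_le (by positivity) h2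
      obtain ⟨k, hk, hEq⟩ := hrec (n+1)
      have h5 : B (n+1) ≤ ρ * B (n+2) := by
        have := mul_le_mul_of_nonneg_left h2 (le_of_lt hρ0)
        rw [← mul_assoc, mul_inv_cancel₀ (ne_of_gt hρ0), one_mul] at this
        exact this
      refine ⟨h4, ?_, ?_⟩
      · rw [hEq]; nlinarith
      · calc ρ⁻¹ ^ (n+1) * B 1 = ρ⁻¹ * (ρ⁻¹ ^ n * B 1) := by ring
          _ ≤ ρ⁻¹ * B (n+1) := by nlinarith
          _ ≤ B (n+2) := h2
  exact fun m => (key m).2.2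

lemma aux_zero (B : ℕ → ℝ) (hB0 : B 0 = 0) (hB1 : B 1 = 0)
    (hrec : ∀ m : ℕ, ∃ k : ℝ, B (m+2) = k * B (m+1) - B m) :
    ∀ m : ℕ, B m = 0 := by
  have key : ∀ m : ℕ, B m = 0 ∧ B (m+1) = 0 := by
    intro m
    induction m with
    | zero => exact ⟨hB0, hB1⟩
    | succ n ih =>
      obtain ⟨k, hEq⟩ := hrec n
      exact ⟨ih.2, by rw [hEq, ih.1, ih.2]; ring⟩
  exact fun m => (key m).1

/-- If `γ = r`, the bounded solution `a` of `Ha = f` (with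
`H = (γ/β²)(-Δ_D + μI) + V`, `f(n) = 2ρⁿ/(1+ρ^{2n})`) is exactly
`a(n) = B₁ β n ρⁿ` with `B₁ = 2(1 + γ/r)⁻¹ = 1`. -/
theorem stmt_8 (ρ β γ r μ : ℝ) (hρ0 : 0 < ρ) (hρ1 : ρ < 1) (hβ : 0 < β) (hγ : 0 < γ)
    (hr : 0 < r) (hrel : (ρ⁻¹ - ρ) / β = 1 / r) (hμ : μ = ρ + ρ⁻¹ - 2)
    (a : ℕ → ℝ) (hbdd : ∃ M : ℝ, ∀ n, |a n| ≤ M)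
    (ha : ∀ n, 1 ≤ n →
      γ / β ^ 2 *
          ((2 * a n - a (n + 1) - (if n = 1 then 0 else a (n - 1))) + μ * a n)
        + (1 - ρ ^ (2 * n)) / (β * (n : ℝ) * (1 + ρ ^ (2 * n))) * a n
      = 2 * ρ ^ n / (1 + ρ ^ (2 * n)))
    (hγr : γ = r) :
    ∀ n, 1 ≤ n → a n = 2 * (1 + γ / r)⁻¹ * (β * (n : ℝ) * ρ ^ n) := by
  subst hμ
  rw [hγr] at hγ ha
  rw [hγr]
  clear hγr hγ
  have hρ0' : ρ ≠ 0 := ne_of_gt hρ0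
  have hβ0 : β ≠ 0 := ne_of_gt hβ
  have hr0 : r ≠ 0 := ne_of_gt hr
  have hone : 1 - ρ * ρ > 0 := by nlinarith
  have hr' : r = β * ρ / (1 - ρ * ρ) := by
    field_simp at hrel
    rw [eq_div_iff (ne_of_gt hone)]
    linarith [hrel]
  -- the simplified constant: 2 * (1 + r/r)⁻¹ = 1
  have hconst : 2 * (1 + r / r)⁻¹ = (1:ℝ) := by
    rw [div_self hr0]; norm_num
  -- candidate solution satisfies the equation
  have hc : ∀ m : ℕ,
      r / β^2 * ((2*(β*((m:ℝ)+1)*ρ^(m+1)) - (β*((m:ℝ)+2)*ρ^(m+2)) - (β*(m:ℝ)*ρ^m))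
        + (ρ+ρ⁻¹-2)*(β*((m:ℝ)+1)*ρ^(m+1)))
      + (1-ρ^(2*(m+1)))/(β*((m:ℝ)+1)*(1+ρ^(2*(m+1)))) * (β*((m:ℝ)+1)*ρ^(m+1))
      = 2*ρ^(m+1)/(1+ρ^(2*(m+1))) := by
    intro m
    rw [hr']
    have hq : ρ ^ (2*(m+1)) = (ρ^m * ρ)^2 := by
      rw [mul_comm 2 (m+1), pow_mul, pow_succ ρ m]
    rw [hq, pow_succ, pow_succ, pow_succ]
    have hqpos : 0 < ρ ^ m := pow_pos hρ0 m
    have hden : 0 < 1 + (ρ^m * ρ)^2 := by positivity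
    have hm1 : (0:ℝ) < (m:ℝ) + 1 := by positivity
    have hone2 : (1:ℝ) - ρ ^ 2 ≠ 0 := by rw [sq]; exact ne_of_gt hone
    field_simp
    ring
  -- the difference B
  set B : ℕ → ℝ := fun n => if n = 0 then 0 else a n - β * n * ρ^n with hB
  have hB0 : B 0 = 0 := by simp [hB]
  have hBn : ∀ n : ℕ, B (n+1) = a (n+1) - β * ((n:ℝ)+1) * ρ^(n+1) := by
    intro n; simp [hB]
  -- recurrence for B
  have hrec : ∀ m : ℕ, ∃ k : ℝ, ρ + ρ⁻¹ ≤ k ∧ B (m+2) = k * B (m+1) - B m := by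
    intro m
    have hD : (0:ℝ) < 1 + ρ^(2*(m+1)) := by positivity
    have hm1 : (0:ℝ) < (m:ℝ) + 1 := by positivity
    refine ⟨ρ + ρ⁻¹ + β^2/r * ((1-ρ^(2*(m+1)))/(β*((m:ℝ)+1)*(1+ρ^(2*(m+1))))), ?_, ?_⟩
    · have hV : 0 ≤ (1-ρ^(2*(m+1)))/(β*((m:ℝ)+1)*(1+ρ^(2*(m+1)))) := by
        apply div_nonneg
        · have : ρ^(2*(m+1)) ≤ 1 := pow_le_one₀ hρ0.le hρ1.le
          linarith
        · positivity
      have : 0 ≤ β^2/r * ((1-ρ^(2*(m+1)))/(β*((m:ℝ)+1)*(1+ρ^(2*(m+1))))) := by positivity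
      linarith
    · have h := ha (m+1) (by omega)
      have hifa : (if m+1 = 1 then (0:ℝ) else a (m+1-1)) = B m + β * (m:ℝ) * ρ^m := by
        cases m with
        | zero => simp [hB]
        | succ p => simp [hB]
      rw [hifa] at h
      push_cast at h
      have hcm := hc m
      have key : r/β^2 * ((2*B (m+1) - B (m+2) - B m) + (ρ+ρ⁻¹-2)*B (m+1))
          + (1-ρ^(2*(m+1)))/(β*((m:ℝ)+1)*(1+ρ^(2*(m+1)))) * B (m+1) = 0 := by
        rw [hBn m, hBn (m+1)]
        push_cast
        linear_combination h - hcm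
      have hcancel : β^2/r * (r/β^2) = 1 := by field_simp
      have key2 : β^2/r * (r/β^2 * ((2*B (m+1) - B (m+2) - B m) + (ρ+ρ⁻¹-2)*B (m+1)))
          + β^2/r * ((1-ρ^(2*(m+1)))/(β*((m:ℝ)+1)*(1+ρ^(2*(m+1)))) * B (m+1)) = 0 := by
        linear_combination (β^2/r) * key
      rw [← mul_assoc, hcancel, one_mul] at key2
      linear_combination -key2
  -- boundedness contradiction machinery
  obtain ⟨M, hM⟩ := hbdd
  have hinv1 : 1 < ρ⁻¹ := (one_lt_inv₀ hρ0).mpr hρ1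
  have hB1 : B 1 = 0 := by
    rcases lt_trichotomy (B 1) 0 with hlt | heq | hgt
    · exfalso
      set C : ℕ → ℝ := fun n => -B n with hC
      have hgrow := aux_growth ρ hρ0 C (by simp [hC, hB0]) (by simp only [hC]; linarith)
        (by intro m; obtain ⟨k, hk, hEq⟩ := hrec m
            exact ⟨k, hk, by simp only [hC]; rw [hEq]; ring⟩)
      obtain ⟨m, hm⟩ := pow_unbounded_of_one_lt ((M + β * (1/(1-ρ))) / (-B 1)) hinv1
      have h1 : (M + β * (1/(1-ρ))) < ρ⁻¹ ^ m * (-B 1) := by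
        rw [div_lt_iff₀ (by linarith)] at hm
        linarith [hm]
      have h2 := hgrow m
      simp only [hC] at h2
      have h3 : a (m+1) = B (m+1) + β * ((m:ℝ)+1) * ρ^(m+1) := by
        rw [hBn m]; ring
      have h4 : β * ((m:ℝ)+1) * ρ^(m+1) ≤ β * (1/(1-ρ)) := by
        have h5 := aux_npow ρ hρ0 hρ1 (m+1)
        push_cast at h5
        nlinarith
      have h6 : a (m+1) < -M := by nlinarith [h2, h1]
      have h7 := hM (m+1)
      rw [abs_le] at h7
      linarith [h7.1]
    · exact heq
    · exfalso
      have hgrow := aux_growth ρ hρ0 B hB0 hgt hrec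
      obtain ⟨m, hm⟩ := pow_unbounded_of_one_lt (M / B 1) hinv1
      have h1 : M < ρ⁻¹ ^ m * B 1 := by
        rw [div_lt_iff₀ hgt] at hm
        linarith [hm]
      have h2 := hgrow m
      have h3 : a (m+1) = B (m+1) + β * ((m:ℝ)+1) * ρ^(m+1) := by
        rw [hBn m]; ring
      have h4 : 0 ≤ β * ((m:ℝ)+1) * ρ^(m+1) := by positivity
      have h5 : M < a (m+1) := by linarith
      have h6 := hM (m+1)
      rw [abs_le] at h6
      linarith [h6.2]
  have hall := aux_zero B hB0 hB1 (fun m => by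
    obtain ⟨k, -, hEq⟩ := hrec m; exact ⟨k, hEq⟩)
  intro n hn
  obtain ⟨m, rfl⟩ : ∃ m, n = m + 1 := ⟨n - 1, by omega⟩
  have hz := hall (m+1)
  rw [hBn m] at hz
  rw [hconst]
  push_cast
  linarith
end

section
/- Let 0 < ρ < 1, β > 0, r > 0 with (ρ⁻¹ - ρ)/β = 1/r, μ = ρ + ρ⁻¹ - 2, γ > 0, and let a be a bounded real solution of (γ/β²)(-Δ_D a + μa)(n) + (1-ρ^{2n})/(βn(1+ρ^{2n})) a(n) = 2ρⁿ/(1+ρ^{2n}), n ≥ 1. Set B₁ = 2(1+γ/r)⁻¹ and B₂ = 2(1 + γ/r - ρ²(1 - γ/r))⁻¹. Then: if 0 < γ < r, B₁βnρⁿ ≤ a(n) ≤ B₂βnρⁿ; if γ = r, a(n) = B₁βnρⁿ; if γ > r, B₂βnρⁿ ≤ a(n) ≤ B₁βnρⁿ, for all n ∈ ℕ. -/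
lemma nrpow_bound (ρ : ℝ) (h0 : 0 < ρ) (h1 : ρ < 1) (n : ℕ) :
    (n : ℝ) * ρ ^ n ≤ ρ / (1 - ρ) := by
  have h1ρ : 0 < 1 - ρ := by linarith
  have hinv : 0 < ρ⁻¹ := inv_pos.mpr h0
  have hb : 1 + (n : ℝ) * (ρ⁻¹ - 1) ≤ (ρ⁻¹) ^ n :=
    by simpa using one_add_mul_le_pow (a := ρ⁻¹ - 1) (by nlinarith) n
  have hρn : 0 < ρ ^ n := pow_pos h0 n
  have hinvpow : (ρ⁻¹) ^ n = (ρ ^ n)⁻¹ := by rw [inv_pow]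
  have h2 : (1 + (n : ℝ) * (ρ⁻¹ - 1)) * ρ ^ n ≤ 1 := by
    calc (1 + (n : ℝ) * (ρ⁻¹ - 1)) * ρ ^ n ≤ (ρ ^ n)⁻¹ * ρ ^ n := by
          rw [← hinvpow]; exact mul_le_mul_of_nonneg_right hb hρn.le
      _ = 1 := inv_mul_cancel₀ hρn.ne'
  rw [le_div_iff₀ h1ρ]
  have h3 : (1 + (n : ℝ) * (ρ⁻¹ - 1)) * ρ ^ n * ρ ≤ ρ := by nlinarith
  have h4 : (ρ⁻¹ - 1) * ρ = 1 - ρ := by field_simp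
  nlinarith [hρn, mul_nonneg (Nat.cast_nonneg n : (0:ℝ) ≤ n) hρn.le]

lemma comparison (c μ : ℝ) (hc : 0 < c) (hμ : 0 < μ) (V : ℕ → ℝ)
    (hV : ∀ n : ℕ, 1 ≤ n → 0 ≤ V n)
    (w : ℕ → ℝ) (M : ℝ) (hM : ∀ n, |w n| ≤ M)
    (hw : ∀ n : ℕ, 1 ≤ n →
      0 ≤ c * ((2 * w n - w (n + 1) - (if n = 1 then 0 else w (n - 1))) + μ * w n)
          + V n * w n) :
    ∀ n : ℕ, 1 ≤ n → 0 ≤ w n := by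
  have key : ∀ ε : ℝ, 0 < ε → ∀ n : ℕ, 1 ≤ n → 0 ≤ w n + ε * n := by
    intro ε hε
    by_contra hcon
    push_neg at hcon
    obtain ⟨n₁, hn₁, hun₁⟩ := hcon
    obtain ⟨N₀, hN₀⟩ := exists_nat_gt (M / ε)
    set N := max n₁ N₀ with hN
    have hn₁N : n₁ ∈ Finset.Icc 1 N := Finset.mem_Icc.mpr ⟨hn₁, le_max_left _ _⟩
    obtain ⟨n₀, hn₀mem, hn₀min⟩ :=
      Finset.exists_min_image (Finset.Icc 1 N) (fun m => w m + ε * m) ⟨n₁, hn₁N⟩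
    obtain ⟨hn₀1, hn₀N⟩ := Finset.mem_Icc.mp hn₀mem
    have hun₀ : w n₀ + ε * n₀ < 0 := lt_of_le_of_lt (hn₀min n₁ hn₁N) hun₁
    have hglob : ∀ m : ℕ, 1 ≤ m → w n₀ + ε * n₀ ≤ w m + ε * m := by
      intro m hm
      by_cases hmN : m ≤ N
      · exact hn₀min m (Finset.mem_Icc.mpr ⟨hm, hmN⟩)
      · push_neg at hmN
        have hmN₀ : (M / ε) < (m : ℝ) := lt_of_lt_of_le hN₀
          (by exact_mod_cast le_of_lt (lt_of_le_of_lt (le_max_right n₁ N₀) hmN))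
        have hMe : M < ε * m := by rw [div_lt_iff₀ hε] at hmN₀; linarith
        have h1 : -M ≤ w m := (abs_le.mp (hM m)).1
        linarith
    have h1 := hglob (n₀ + 1) (by omega)
    have hw0 := hw n₀ hn₀1
    have hn₀c : ((n₀ + 1 : ℕ) : ℝ) = (n₀ : ℝ) + 1 := by push_cast; ring
    rw [hn₀c] at h1
    have hwneg : w n₀ < 0 := by
      have : (0:ℝ) < ε * n₀ := mul_pos hε (by exact_mod_cast hn₀1)
      linarith
    rcases eq_or_lt_of_le hn₀1 with h1eq | h2le
    · -- n₀ = 1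
      have e : n₀ = 1 := h1eq.symm
      subst e
      simp only [if_pos rfl] at hw0
      norm_num at h1 hun₀ hw0
      -- h1 : w 1 + ε ≤ w (1+1) + ε * (1+1)... now numerals
      have hV1 : 0 ≤ V 1 := hV 1 le_rfl
      nlinarith [mul_neg_of_pos_of_neg hc (show 2 * w 1 - w 2 + μ * w 1 < 0 by nlinarith),
        mul_nonpos_of_nonneg_of_nonpos hV1 hwneg.le]
    · -- n₀ ≥ 2
      have hne : n₀ ≠ 1 := by omega
      simp only [if_neg hne] at hw0
      have h2 := hglob (n₀ - 1) (by omega)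
      have hcast : ((n₀ - 1 : ℕ) : ℝ) = (n₀ : ℝ) - 1 := by
        have h : (1:ℕ) ≤ n₀ := hn₀1
        push_cast [Nat.cast_sub h]; ring
      rw [hcast] at h2
      have hVn : 0 ≤ V n₀ := hV n₀ hn₀1
      have hA : 2 * w n₀ - w (n₀ + 1) - w (n₀ - 1) + μ * w n₀ < 0 := by nlinarith
      nlinarith [mul_neg_of_pos_of_neg hc hA,
        mul_nonpos_of_nonneg_of_nonpos hVn hwneg.le]
  intro n hn
  have hnpos : (0:ℝ) < n := by exact_mod_cast hn
  refine le_of_forall_pos_le_add ?_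
  intro ε hε
  have h := key (ε / n) (div_pos hε hnpos) n hn
  rw [div_mul_cancel₀ _ hnpos.ne'] at h
  linarith

lemma key_identity (ρ β γ r μ : ℝ) (hρ0 : 0 < ρ) (hρ1 : ρ < 1) (hβ : 0 < β)
    (hr : 0 < r) (hrel : (ρ⁻¹ - ρ) / β = 1 / r) (hμ : μ = ρ + ρ⁻¹ - 2) (C : ℝ)
    (n : ℕ) (hn : 1 ≤ n) :
    γ / β ^ 2 *
        ((2 * (C * β * (n : ℝ) * ρ ^ n) - C * β * ((n + 1 : ℕ) : ℝ) * ρ ^ (n + 1)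
            - (if n = 1 then 0 else C * β * ((n - 1 : ℕ) : ℝ) * ρ ^ (n - 1)))
          + μ * (C * β * (n : ℝ) * ρ ^ n))
      + (1 - ρ ^ (2 * n)) / (β * (n : ℝ) * (1 + ρ ^ (2 * n))) * (C * β * (n : ℝ) * ρ ^ n)
    = ρ ^ n / (1 + ρ ^ (2 * n)) * (C * (1 + γ / r - (1 - γ / r) * ρ ^ (2 * n))) := by
  obtain ⟨m, rfl⟩ : ∃ m, n = m + 1 := ⟨n - 1, by omega⟩
  have hif : (if m + 1 = 1 then (0:ℝ) else C * β * ((m + 1 - 1 : ℕ) : ℝ) * ρ ^ (m + 1 - 1))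
      = C * β * (m : ℝ) * ρ ^ m := by
    rcases Nat.eq_zero_or_pos m with hm | hm
    · subst hm; simp
    · rw [if_neg (by omega)]
      norm_num
  rw [hif]
  have hx2 : (0:ℝ) < 1 + ρ ^ (2 * (m + 1)) := by positivity
  have hm1 : (0:ℝ) < ((m + 1 : ℕ) : ℝ) := by positivity
  have h1r : (1:ℝ) / r = (1 - ρ ^ 2) / (β * ρ) := by
    rw [← hrel]; field_simp
  have hgr : γ / r = γ * ((1 - ρ ^ 2) / (β * ρ)) := by
    rw [div_eq_mul_one_div γ r, h1r]
  have hμ' : μ = (1 - ρ) ^ 2 / ρ := by rw [hμ]; field_simp; ring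
  have e1 : ρ ^ (m + 1) = ρ ^ m * ρ := pow_succ ρ m
  have e2 : ρ ^ (m + 1 + 1) = ρ ^ m * ρ * ρ := by rw [pow_succ, e1]
  have e3 : ρ ^ (2 * (m + 1)) = (ρ ^ m * ρ) ^ 2 := by rw [pow_mul', e1]
  rw [hgr, hμ'] at *
  rw [e2, e3]
  rw [e1]
  push_cast
  have hxp : (0:ℝ) < 1 + (ρ ^ m * ρ) ^ 2 := by positivity
  have hmp : (0:ℝ) < (m : ℝ) + 1 := by positivity
  field_simp
  ring

lemma lower_bound (ρ β γ r μ : ℝ) (hρ0 : 0 < ρ) (hρ1 : ρ < 1) (hβ : 0 < β)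
    (hγ : 0 < γ) (hr : 0 < r) (hrel : (ρ⁻¹ - ρ) / β = 1 / r) (hμ : μ = ρ + ρ⁻¹ - 2)
    (a : ℕ → ℝ) (hbdd : ∃ M : ℝ, ∀ n, |a n| ≤ M)
    (ha : ∀ n, 1 ≤ n →
      γ / β ^ 2 *
          ((2 * a n - a (n + 1) - (if n = 1 then 0 else a (n - 1))) + μ * a n)
        + (1 - ρ ^ (2 * n)) / (β * (n : ℝ) * (1 + ρ ^ (2 * n))) * a n
      = 2 * ρ ^ n / (1 + ρ ^ (2 * n)))
    (C : ℝ)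
    (hC : ∀ n : ℕ, 1 ≤ n → C * (1 + γ / r - (1 - γ / r) * ρ ^ (2 * n)) ≤ 2) :
    ∀ n : ℕ, 1 ≤ n → C * β * (n : ℝ) * ρ ^ n ≤ a n := by
  obtain ⟨M, hM⟩ := hbdd
  have hμpos : 0 < μ := by
    rw [hμ]
    have : ρ + ρ⁻¹ - 2 = (1 - ρ) ^ 2 / ρ := by field_simp; ring
    rw [this]; exact div_pos (by nlinarith) hρ0
  have hcpos : 0 < γ / β ^ 2 := by positivity
  have hres := comparison (γ / β ^ 2) μ hcpos hμpos
    (fun n => (1 - ρ ^ (2 * n)) / (β * (n : ℝ) * (1 + ρ ^ (2 * n))))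
    (by
      intro n hn
      have h1 : ρ ^ (2 * n) ≤ 1 := pow_le_one₀ hρ0.le hρ1.le
      have h2 : (0:ℝ) < (n : ℝ) := by exact_mod_cast hn
      have h3 : (0:ℝ) < 1 + ρ ^ (2 * n) := by positivity
      exact div_nonneg (by linarith) (by positivity))
    (fun m => a m - C * β * (m : ℝ) * ρ ^ m)
    (M + |C| * β * (ρ / (1 - ρ)))
    (by
      intro n
      have h1 := hM n
      have h2 : |C * β * (n : ℝ) * ρ ^ n| = |C| * (β * ((n : ℝ) * ρ ^ n)) := by
        rw [abs_mul, abs_mul, abs_mul, abs_of_pos hβ, abs_of_nonneg (Nat.cast_nonneg n : (0:ℝ) ≤ n),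
          abs_of_nonneg (pow_nonneg hρ0.le n)]
        ring
      have h3 := nrpow_bound ρ hρ0 hρ1 n
      have h4 : |C| * (β * ((n:ℝ) * ρ ^ n)) ≤ |C| * β * (ρ / (1 - ρ)) := by
        rw [show |C| * β * (ρ / (1-ρ)) = |C| * (β * (ρ / (1-ρ))) by ring]
        exact mul_le_mul_of_nonneg_left
          (mul_le_mul_of_nonneg_left h3 hβ.le) (abs_nonneg C)
      calc |a n - C * β * (n : ℝ) * ρ ^ n| ≤ |a n| + |C * β * (n : ℝ) * ρ ^ n| :=
            abs_sub _ _
        _ ≤ M + |C| * β * (ρ / (1 - ρ)) := by rw [h2]; linarith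
      )
    (by
      intro n hn
      have hkey := key_identity ρ β γ r μ hρ0 hρ1 hβ hr hrel hμ C n hn
      have han := ha n hn
      have hCn := hC n hn
      have h3 : (0:ℝ) < 1 + ρ ^ (2 * n) := by positivity
      have hρn : (0:ℝ) < ρ ^ n := pow_pos hρ0 n
      have hgoal : γ / β ^ 2 *
          ((2 * (a n - C * β * (n:ℝ) * ρ ^ n)
            - (a (n+1) - C * β * ((n+1:ℕ):ℝ) * ρ ^ (n+1))
            - (if n = 1 then 0 else (a (n-1) - C * β * ((n-1:ℕ):ℝ) * ρ ^ (n-1))))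
            + μ * (a n - C * β * (n:ℝ) * ρ ^ n))
          + (1 - ρ ^ (2 * n)) / (β * (n:ℝ) * (1 + ρ ^ (2 * n))) * (a n - C * β * (n:ℝ) * ρ ^ n)
          = 2 * ρ ^ n / (1 + ρ ^ (2 * n))
            - ρ ^ n / (1 + ρ ^ (2 * n)) * (C * (1 + γ / r - (1 - γ / r) * ρ ^ (2 * n))) := by
        rw [← han, ← hkey]
        by_cases hn1 : n = 1 <;> simp only [hn1, if_pos, if_neg, if_true, if_false] <;> ring
      refine le_trans ?_ (le_of_eq hgoal.symm)
      rw [show 2 * ρ ^ n / (1 + ρ ^ (2*n)) - ρ ^ n / (1 + ρ ^ (2*n)) * (C * (1 + γ/r - (1-γ/r) * ρ^(2*n)))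
          = ρ ^ n / (1 + ρ ^ (2*n)) * (2 - C * (1 + γ/r - (1-γ/r) * ρ^(2*n))) by ring]
      exact mul_nonneg (div_nonneg hρn.le h3.le) (by linarith))
  intro n hn
  have h2 : 0 ≤ a n - C * β * (n : ℝ) * ρ ^ n := hres n hn
  linarith

lemma upper_bound (ρ β γ r μ : ℝ) (hρ0 : 0 < ρ) (hρ1 : ρ < 1) (hβ : 0 < β)
    (hγ : 0 < γ) (hr : 0 < r) (hrel : (ρ⁻¹ - ρ) / β = 1 / r) (hμ : μ = ρ + ρ⁻¹ - 2)
    (a : ℕ → ℝ) (hbdd : ∃ M : ℝ, ∀ n, |a n| ≤ M)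
    (ha : ∀ n, 1 ≤ n →
      γ / β ^ 2 *
          ((2 * a n - a (n + 1) - (if n = 1 then 0 else a (n - 1))) + μ * a n)
        + (1 - ρ ^ (2 * n)) / (β * (n : ℝ) * (1 + ρ ^ (2 * n))) * a n
      = 2 * ρ ^ n / (1 + ρ ^ (2 * n)))
    (C : ℝ)
    (hC : ∀ n : ℕ, 1 ≤ n → 2 ≤ C * (1 + γ / r - (1 - γ / r) * ρ ^ (2 * n))) :
    ∀ n : ℕ, 1 ≤ n → a n ≤ C * β * (n : ℝ) * ρ ^ n := by
  obtain ⟨M, hM⟩ := hbdd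
  have hμpos : 0 < μ := by
    rw [hμ]
    have : ρ + ρ⁻¹ - 2 = (1 - ρ) ^ 2 / ρ := by field_simp; ring
    rw [this]; exact div_pos (by nlinarith) hρ0
  have hcpos : 0 < γ / β ^ 2 := by positivity
  have hres := comparison (γ / β ^ 2) μ hcpos hμpos
    (fun n => (1 - ρ ^ (2 * n)) / (β * (n : ℝ) * (1 + ρ ^ (2 * n))))
    (by
      intro n hn
      have h1 : ρ ^ (2 * n) ≤ 1 := pow_le_one₀ hρ0.le hρ1.le
      have h2 : (0:ℝ) < (n : ℝ) := by exact_mod_cast hn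
      have h3 : (0:ℝ) < 1 + ρ ^ (2 * n) := by positivity
      exact div_nonneg (by linarith) (by positivity))
    (fun m => C * β * (m : ℝ) * ρ ^ m - a m)
    (M + |C| * β * (ρ / (1 - ρ)))
    (by
      intro n
      have h1 := hM n
      have h2 : |C * β * (n : ℝ) * ρ ^ n| = |C| * (β * ((n : ℝ) * ρ ^ n)) := by
        rw [abs_mul, abs_mul, abs_mul, abs_of_pos hβ, abs_of_nonneg (Nat.cast_nonneg n : (0:ℝ) ≤ n),
          abs_of_nonneg (pow_nonneg hρ0.le n)]
        ring
      have h3 := nrpow_bound ρ hρ0 hρ1 n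
      have h4 : |C| * (β * ((n:ℝ) * ρ ^ n)) ≤ |C| * β * (ρ / (1 - ρ)) := by
        rw [show |C| * β * (ρ / (1-ρ)) = |C| * (β * (ρ / (1-ρ))) by ring]
        exact mul_le_mul_of_nonneg_left
          (mul_le_mul_of_nonneg_left h3 hβ.le) (abs_nonneg C)
      calc |C * β * (n : ℝ) * ρ ^ n - a n| ≤ |C * β * (n : ℝ) * ρ ^ n| + |a n| :=
            abs_sub _ _
        _ ≤ M + |C| * β * (ρ / (1 - ρ)) := by rw [h2]; linarith
      )
    (by
      intro n hn
      have hkey := key_identity ρ β γ r μ hρ0 hρ1 hβ hr hrel hμ C n hn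
      have han := ha n hn
      have hCn := hC n hn
      have h3 : (0:ℝ) < 1 + ρ ^ (2 * n) := by positivity
      have hρn : (0:ℝ) < ρ ^ n := pow_pos hρ0 n
      have hgoal : γ / β ^ 2 *
          ((2 * (C * β * (n:ℝ) * ρ ^ n - a n)
            - (C * β * ((n+1:ℕ):ℝ) * ρ ^ (n+1) - a (n+1))
            - (if n = 1 then 0 else (C * β * ((n-1:ℕ):ℝ) * ρ ^ (n-1) - a (n-1))))
            + μ * (C * β * (n:ℝ) * ρ ^ n - a n))
          + (1 - ρ ^ (2 * n)) / (β * (n:ℝ) * (1 + ρ ^ (2 * n))) * (C * β * (n:ℝ) * ρ ^ n - a n)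
          = ρ ^ n / (1 + ρ ^ (2 * n)) * (C * (1 + γ / r - (1 - γ / r) * ρ ^ (2 * n)))
            - 2 * ρ ^ n / (1 + ρ ^ (2 * n)) := by
        rw [← han, ← hkey]
        by_cases hn1 : n = 1 <;> simp only [hn1, if_pos, if_neg, if_true, if_false] <;> ring
      refine le_trans ?_ (le_of_eq hgoal.symm)
      rw [show ρ ^ n / (1 + ρ ^ (2*n)) * (C * (1 + γ/r - (1-γ/r) * ρ^(2*n))) - 2 * ρ ^ n / (1 + ρ ^ (2*n))
          = ρ ^ n / (1 + ρ ^ (2*n)) * (C * (1 + γ/r - (1-γ/r) * ρ^(2*n)) - 2) by ring]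
      exact mul_nonneg (div_nonneg hρn.le h3.le) (by linarith))
  intro n hn
  have h2 : 0 ≤ C * β * (n : ℝ) * ρ ^ n - a n := hres n hn
  linarith

theorem stmt_9' (ρ β γ r μ B₁ B₂ : ℝ) (hρ0 : 0 < ρ) (hρ1 : ρ < 1) (hβ : 0 < β)
    (hγ : 0 < γ) (hr : 0 < r) (hrel : (ρ⁻¹ - ρ) / β = 1 / r) (hμ : μ = ρ + ρ⁻¹ - 2)
    (hB1 : B₁ = 2 * (1 + γ / r)⁻¹)
    (hB2 : B₂ = 2 * (1 + γ / r - ρ ^ 2 * (1 - γ / r))⁻¹)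
    (a : ℕ → ℝ) (hbdd : ∃ M : ℝ, ∀ n, |a n| ≤ M)
    (ha : ∀ n, 1 ≤ n →
      γ / β ^ 2 *
          ((2 * a n - a (n + 1) - (if n = 1 then 0 else a (n - 1))) + μ * a n)
        + (1 - ρ ^ (2 * n)) / (β * (n : ℝ) * (1 + ρ ^ (2 * n))) * a n
      = 2 * ρ ^ n / (1 + ρ ^ (2 * n))) :
    (γ < r → ∀ n : ℕ, 1 ≤ n →
        B₁ * β * (n : ℝ) * ρ ^ n ≤ a n ∧ a n ≤ B₂ * β * (n : ℝ) * ρ ^ n) ∧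
    (γ = r → ∀ n : ℕ, 1 ≤ n → a n = B₁ * β * (n : ℝ) * ρ ^ n) ∧
    (r < γ → ∀ n : ℕ, 1 ≤ n →
        B₂ * β * (n : ℝ) * ρ ^ n ≤ a n ∧ a n ≤ B₁ * β * (n : ℝ) * ρ ^ n) := by
  have hk : 0 < γ / r := div_pos hγ hr
  have h1k : (0:ℝ) < 1 + γ / r := by linarith
  have hD : (0:ℝ) < 1 + γ / r - ρ ^ 2 * (1 - γ / r) := by
    nlinarith [sq_nonneg ρ, pow_lt_one₀ hρ0.le hρ1 (two_ne_zero)]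
  have hE1 : 2 * (1 + γ / r)⁻¹ * (1 + γ / r) = 2 := by
    rw [mul_assoc, inv_mul_cancel₀ h1k.ne', mul_one]
  have hE2 : 2 * (1 + γ / r - ρ ^ 2 * (1 - γ / r))⁻¹ * (1 + γ / r - ρ ^ 2 * (1 - γ / r)) = 2 := by
    rw [mul_assoc, inv_mul_cancel₀ hD.ne', mul_one]
  have hpow : ∀ n : ℕ, 1 ≤ n → ρ ^ (2 * n) ≤ ρ ^ 2 ∧ 0 ≤ ρ ^ (2 * n) := by
    intro n hn
    exact ⟨pow_le_pow_of_le_one hρ0.le hρ1.le (by omega), (pow_pos hρ0 _).le⟩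
  refine ⟨?_, ?_, ?_⟩
  · -- γ < r
    intro hγr n hn
    have hk1 : γ / r < 1 := (div_lt_one hr).mpr hγr
    constructor
    · refine lower_bound ρ β γ r μ hρ0 hρ1 hβ hγ hr hrel hμ a hbdd ha B₁ ?_ n hn
      intro m hm
      obtain ⟨hq1, hq2⟩ := hpow m hm
      rw [hB1]
      have hφ : 1 + γ / r - (1 - γ / r) * ρ ^ (2 * m) ≤ 1 + γ / r := by
        nlinarith [mul_nonneg (show (0:ℝ) ≤ 1 - γ / r by linarith) hq2]
      linarith [mul_le_mul_of_nonneg_left hφ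
        (show (0:ℝ) ≤ 2 * (1 + γ / r)⁻¹ by positivity), hE1]
    · refine upper_bound ρ β γ r μ hρ0 hρ1 hβ hγ hr hrel hμ a hbdd ha B₂ ?_ n hn
      intro m hm
      obtain ⟨hq1, hq2⟩ := hpow m hm
      rw [hB2]
      have hφ : 1 + γ / r - ρ ^ 2 * (1 - γ / r) ≤ 1 + γ / r - (1 - γ / r) * ρ ^ (2 * m) := by
        nlinarith [mul_nonneg (show (0:ℝ) ≤ 1 - γ / r by linarith)
          (show (0:ℝ) ≤ ρ ^ 2 - ρ ^ (2 * m) by linarith)]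
      linarith [mul_le_mul_of_nonneg_left hφ
        (show (0:ℝ) ≤ 2 * (1 + γ / r - ρ ^ 2 * (1 - γ / r))⁻¹ by positivity), hE2]
  · -- γ = r
    intro hγr n hn
    have hk1 : γ / r = 1 := by rw [hγr]; exact div_self hr.ne'
    have hφ : ∀ m : ℕ, B₁ * (1 + γ / r - (1 - γ / r) * ρ ^ (2 * m)) = 2 := by
      intro m
      rw [hB1, hk1]; norm_num
    refine le_antisymm
      (upper_bound ρ β γ r μ hρ0 hρ1 hβ hγ hr hrel hμ a hbdd ha B₁
        (fun m hm => (hφ m).ge) n hn)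
      (lower_bound ρ β γ r μ hρ0 hρ1 hβ hγ hr hrel hμ a hbdd ha B₁
        (fun m hm => (hφ m).le) n hn)
  · -- r < γ
    intro hγr n hn
    have hk1 : 1 < γ / r := (one_lt_div hr).mpr hγr
    constructor
    · refine lower_bound ρ β γ r μ hρ0 hρ1 hβ hγ hr hrel hμ a hbdd ha B₂ ?_ n hn
      intro m hm
      obtain ⟨hq1, hq2⟩ := hpow m hm
      rw [hB2]
      have hφ : 1 + γ / r - (1 - γ / r) * ρ ^ (2 * m) ≤ 1 + γ / r - ρ ^ 2 * (1 - γ / r) := by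
        nlinarith [mul_nonneg (show (0:ℝ) ≤ γ / r - 1 by linarith)
          (show (0:ℝ) ≤ ρ ^ 2 - ρ ^ (2 * m) by linarith)]
      linarith [mul_le_mul_of_nonneg_left hφ
        (show (0:ℝ) ≤ 2 * (1 + γ / r - ρ ^ 2 * (1 - γ / r))⁻¹ by positivity), hE2]
    · refine upper_bound ρ β γ r μ hρ0 hρ1 hβ hγ hr hrel hμ a hbdd ha B₁ ?_ n hn
      intro m hm
      obtain ⟨hq1, hq2⟩ := hpow m hm
      rw [hB1]
      have hφ : 1 + γ / r ≤ 1 + γ / r - (1 - γ / r) * ρ ^ (2 * m) := by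
        nlinarith [mul_nonneg (show (0:ℝ) ≤ γ / r - 1 by linarith) hq2]
      linarith [mul_le_mul_of_nonneg_left hφ
        (show (0:ℝ) ≤ 2 * (1 + γ / r)⁻¹ by positivity), hE1]



/-- Two-sided bounds for the bounded solution `a` of `Ha = f`:
with `B₁ = 2(1+γ/r)⁻¹` and `B₂ = 2(1 + γ/r - ρ²(1 - γ/r))⁻¹`, one has
`B₁βnρⁿ ≤ a(n) ≤ B₂βnρⁿ` if `γ < r`, `a(n) = B₁βnρⁿ` if `γ = r`, and
`B₂βnρⁿ ≤ a(n) ≤ B₁βnρⁿ` if `γ > r`, for all `n ≥ 1`. -/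
theorem stmt_9 (ρ β γ r μ B₁ B₂ : ℝ) (hρ0 : 0 < ρ) (hρ1 : ρ < 1) (hβ : 0 < β)
    (hγ : 0 < γ) (hr : 0 < r) (hrel : (ρ⁻¹ - ρ) / β = 1 / r) (hμ : μ = ρ + ρ⁻¹ - 2)
    (hB1 : B₁ = 2 * (1 + γ / r)⁻¹)
    (hB2 : B₂ = 2 * (1 + γ / r - ρ ^ 2 * (1 - γ / r))⁻¹)
    (a : ℕ → ℝ) (hbdd : ∃ M : ℝ, ∀ n, |a n| ≤ M)
    (ha : ∀ n, 1 ≤ n →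
      γ / β ^ 2 *
          ((2 * a n - a (n + 1) - (if n = 1 then 0 else a (n - 1))) + μ * a n)
        + (1 - ρ ^ (2 * n)) / (β * (n : ℝ) * (1 + ρ ^ (2 * n))) * a n
      = 2 * ρ ^ n / (1 + ρ ^ (2 * n))) :
    (γ < r → ∀ n : ℕ, 1 ≤ n →
        B₁ * β * (n : ℝ) * ρ ^ n ≤ a n ∧ a n ≤ B₂ * β * (n : ℝ) * ρ ^ n) ∧
    (γ = r → ∀ n : ℕ, 1 ≤ n → a n = B₁ * β * (n : ℝ) * ρ ^ n) ∧
    (r < γ → ∀ n : ℕ, 1 ≤ n →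
        B₂ * β * (n : ℝ) * ρ ^ n ≤ a n ∧ a n ≤ B₁ * β * (n : ℝ) * ρ ^ n) := by
  exact stmt_9' ρ β γ r μ B₁ B₂ hρ0 hρ1 hβ hγ hr hrel hμ hB1 hB2 a hbdd ha
end

section
/- Let 0 < ρ < 1, β, γ, r > 0 with (ρ⁻¹ - ρ)/β = 1/r, μ = ρ + ρ⁻¹ - 2, g(n) = nρⁿ, and let a be the bounded solution of Ha = f where H = (γ/β²)(-Δ_D + μI) + V, (Vξ)(n) = (1-ρ^{2n})/(βn(1+ρ^{2n}))ξ(n), f(n) = 2ρⁿ/(1+ρ^{2n}). Then for any constant C, H(a - Cβg)(n) = ρⁿ/(1+ρ^{2n})·(2 - C(1 + γ/r - (1 - γ/r)ρ^{2n})) for all n ∈ ℕ. -/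
/-- For the bounded solution `a` of `Ha = f` and `g(n) = nρⁿ`, for any constant `C`:
`H(a - Cβg)(n) = ρⁿ/(1+ρ^{2n}) · (2 - C(1 + γ/r - (1 - γ/r)ρ^{2n}))` for all `n ≥ 1`. -/
theorem stmt_10 (ρ β γ r μ : ℝ) (hρ0 : 0 < ρ) (hρ1 : ρ < 1) (hβ : 0 < β)
    (hγ : 0 < γ) (hr : 0 < r) (hrel : (ρ⁻¹ - ρ) / β = 1 / r) (hμ : μ = ρ + ρ⁻¹ - 2)
    (a : ℕ → ℝ) (hbdd : ∃ M : ℝ, ∀ n, |a n| ≤ M)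
    (ha : ∀ n, 1 ≤ n →
      γ / β ^ 2 *
          ((2 * a n - a (n + 1) - (if n = 1 then 0 else a (n - 1))) + μ * a n)
        + (1 - ρ ^ (2 * n)) / (β * (n : ℝ) * (1 + ρ ^ (2 * n))) * a n
      = 2 * ρ ^ n / (1 + ρ ^ (2 * n))) :
    ∀ (C : ℝ) (n : ℕ), 1 ≤ n →
      γ / β ^ 2 *
          ((2 * (a n - C * β * ((n : ℝ) * ρ ^ n))
              - (a (n + 1) - C * β * (((n + 1 : ℕ) : ℝ) * ρ ^ (n + 1)))
              - (if n = 1 then 0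
                 else a (n - 1) - C * β * (((n - 1 : ℕ) : ℝ) * ρ ^ (n - 1))))
            + μ * (a n - C * β * ((n : ℝ) * ρ ^ n)))
        + (1 - ρ ^ (2 * n)) / (β * (n : ℝ) * (1 + ρ ^ (2 * n)))
            * (a n - C * β * ((n : ℝ) * ρ ^ n))
      = ρ ^ n / (1 + ρ ^ (2 * n)) *
          (2 - C * (1 + γ / r - (1 - γ / r) * ρ ^ (2 * n))) := by
  intro C n hn
  obtain ⟨m, rfl⟩ : ∃ m, n = m + 1 := ⟨n - 1, (Nat.succ_pred_eq_of_pos hn).symm⟩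
  have key := ha (m + 1) hn
  have hρ : ρ ≠ 0 := ne_of_gt hρ0
  have hβ' : β ≠ 0 := ne_of_gt hβ
  have hr' : r ≠ 0 := ne_of_gt hr
  have hpos : (0:ℝ) < 1 + ρ ^ (2 * (m + 1)) := by positivity
  have hden : (1:ℝ) + ρ ^ (2 * (m + 1)) ≠ 0 := ne_of_gt hpos
  have hn' : ((m:ℝ) + 1) ≠ 0 := by positivity
  have hrel' : r * (1 - ρ ^ 2) = β * ρ := by
    field_simp at hrel; nlinarith [hrel]
  subst hμ
  have hq : ρ * ρ⁻¹ = 1 := mul_inv_cancel₀ hρ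
  rcases Nat.eq_zero_or_pos m with rfl | hm
  · simp only [if_pos rfl] at key ⊢
    push_cast at key ⊢
    field_simp at key ⊢
    linear_combination r * key - C * β * γ * ρ * (1+ρ^2) * hrel'
  · have hne : m + 1 ≠ 1 := by omega
    simp only [if_neg hne] at key ⊢
    have hcast : ((m + 1 - 1 : ℕ) : ℝ) = (m : ℝ) := by push_cast [Nat.add_sub_cancel]; ring
    rw [Nat.add_sub_cancel] at *
    push_cast at key ⊢
    field_simp at key ⊢
    linear_combination r * key - C * β * γ * ((m:ℝ)+1) * ρ^(m+1) * (1+ρ^(2*(m+1))) * hrel'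
end

section
/- Let 0 < ρ < 1, β, γ, r > 0 with (ρ⁻¹ - ρ)/β = 1/r, and let a be the bounded real solution of the recursion (γ/β²)(-Δ_D a + μa)(n) + (1-ρ^{2n})/(βn(1+ρ^{2n})) a(n) = 2ρⁿ/(1+ρ^{2n}), n ≥ 1, with μ = ρ + ρ⁻¹ - 2. Then 0 ≤ a(n) ≤ 2(βn + r)ρⁿ for all n ∈ ℕ. -/
lemma geomAux11 (y : ℝ) (hy0 : 0 ≤ y) (hy1 : y ≤ 1) :
    ∀ m : ℕ, ((m : ℝ) + 1) * y ^ m * (1 - y) ≤ 1 - y ^ (m + 1) := by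
  intro m
  induction m with
  | zero => simp
  | succ k ih =>
      have hyk : y ^ (k + 1) ≤ y ^ k := pow_le_pow_of_le_one hy0 hy1 (by omega)
      have hnn : (0 : ℝ) ≤ (k : ℝ) + 1 := by positivity
      have h := mul_le_mul_of_nonneg_left
        (mul_le_mul_of_nonneg_right hyk (by linarith : (0:ℝ) ≤ 1 - y)) hnn
      have hp : y ^ (k + 1 + 1) = y ^ (k + 1) * y := pow_succ y (k + 1)
      push_cast
      nlinarith [ih, h, hp, pow_succ y k]

lemma maxprin11 (K q0 : ℝ) (hK : 0 < K) (hq0 : 0 < q0) (b : ℕ → ℝ) (hb0 : b 0 ≤ 0)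
    (hbdd : ∃ M : ℝ, ∀ n, b n ≤ M)
    (hrec : ∀ n : ℕ, 1 ≤ n → 0 < b n →
      K * (2 * b n - b (n + 1) - b (n - 1)) + q0 * b n ≤ 0) :
    ∀ n, b n ≤ 0 := by
  by_contra h
  push_neg at h
  obtain ⟨n0, hn0⟩ := h
  obtain ⟨M0, hM0⟩ := hbdd
  have hne : (Set.range b).Nonempty := ⟨b 0, 0, rfl⟩
  have hba : BddAbove (Set.range b) := ⟨M0, by rintro _ ⟨k, rfl⟩; exact hM0 k⟩
  set M := sSup (Set.range b) with hM
  have hle : ∀ k, b k ≤ M := fun k => le_csSup hba ⟨k, rfl⟩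
  have hMpos : 0 < M := lt_of_lt_of_le hn0 (hle n0)
  have hden : (0:ℝ) < 2 * (2 * K + q0) := by nlinarith
  set ε := q0 * M / (2 * (2 * K + q0)) with hε
  have hεpos : 0 < ε := div_pos (by nlinarith) hden
  have hεM : ε < M := by
    rw [hε, div_lt_iff₀ hden]; nlinarith
  obtain ⟨x, hxS, hx⟩ := exists_lt_of_lt_csSup hne (show M - ε < M by linarith)
  obtain ⟨n, rfl⟩ := hxS
  have hn1 : 1 ≤ n := by
    rcases Nat.eq_zero_or_pos n with h0 | h0
    · subst h0; linarith
    · exact h0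
  have hbn : 0 < b n := by linarith
  have hr := hrec n hn1 hbn
  have h1 := hle (n + 1)
  have h2 := hle (n - 1)
  have hεeq : ε * (2 * (2 * K + q0)) = q0 * M := by
    rw [hε]; field_simp
  nlinarith [mul_le_mul_of_nonneg_left h1 hK.le, mul_le_mul_of_nonneg_left h2 hK.le,
    mul_pos (show (0:ℝ) < 2 * K + q0 by nlinarith) (show 0 < b n - (M - ε) by linarith),
    mul_pos hden hεpos]

set_option maxHeartbeats 2000000 in
/-- Rough bounds for the bounded solution `a` of `Ha = f`:
`0 ≤ a(n) ≤ 2(βn + r)ρⁿ` for all `n ≥ 1` and all `ρ, β, γ, r`. -/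
theorem stmt_11 (ρ β γ r μ : ℝ) (hρ0 : 0 < ρ) (hρ1 : ρ < 1) (hβ : 0 < β)
    (hγ : 0 < γ) (hr : 0 < r) (hrel : (ρ⁻¹ - ρ) / β = 1 / r) (hμ : μ = ρ + ρ⁻¹ - 2)
    (a : ℕ → ℝ) (hbdd : ∃ M : ℝ, ∀ n, |a n| ≤ M)
    (ha : ∀ n, 1 ≤ n →
      γ / β ^ 2 *
          ((2 * a n - a (n + 1) - (if n = 1 then 0 else a (n - 1))) + μ * a n)
        + (1 - ρ ^ (2 * n)) / (β * (n : ℝ) * (1 + ρ ^ (2 * n))) * a n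
      = 2 * ρ ^ n / (1 + ρ ^ (2 * n))) :
    ∀ n : ℕ, 1 ≤ n → 0 ≤ a n ∧ a n ≤ 2 * (β * (n : ℝ) + r) * ρ ^ n := by
  have hρne : ρ ≠ 0 := ne_of_gt hρ0
  have hβne : β ≠ 0 := ne_of_gt hβ
  have hrne : r ≠ 0 := ne_of_gt hr
  have hrγ : (0:ℝ) < r + γ := by linarith
  have hrγne : r + γ ≠ 0 := ne_of_gt hrγ
  have hinv : ρ * ρ⁻¹ = 1 := mul_inv_cancel₀ hρne
  have hbρ : β * ρ = r * (1 - ρ^2) := by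
    have h := hrel
    field_simp at h
    linarith
  have hμpos : 0 < μ := by
    rw [hμ]
    nlinarith [mul_pos (sub_pos.mpr hρ1) (sub_pos.mpr hρ1), hinv, hρ0]
  set K := γ / β ^ 2 with hK
  have hKpos : 0 < K := div_pos hγ (pow_pos hβ 2)
  set q0 := K * μ with hq0
  have hq0pos : 0 < q0 := mul_pos hKpos hμpos
  have hxnn : ∀ n : ℕ, (0:ℝ) ≤ ρ ^ (2*n) := fun n => pow_nonneg hρ0.le _
  have hxlt : ∀ n : ℕ, 1 ≤ n → ρ ^ (2*n) < 1 := fun n hn => pow_lt_one₀ hρ0.le hρ1 (by omega)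
  have hcnn : ∀ n : ℕ, 1 ≤ n →
      0 ≤ (1 - ρ^(2*n)) / (β * (n:ℝ) * (1 + ρ^(2*n))) := by
    intro n hn
    have hN : (1:ℝ) ≤ (n:ℝ) := by exact_mod_cast hn
    exact div_nonneg (by linarith [hxlt n hn])
      (mul_nonneg (mul_nonneg hβ.le (Nat.cast_nonneg n)) (by linarith [hxnn n]))
  have hfpos : ∀ n : ℕ, 0 < 2 * ρ ^ n / (1 + ρ ^ (2*n)) := by
    intro n
    exact div_pos (by nlinarith [pow_pos hρ0 n]) (by nlinarith [hxnn n])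
  -- ============ lower bound ============
  have hlow : ∀ n : ℕ, 1 ≤ n → 0 ≤ a n := by
    set b : ℕ → ℝ := fun k => if k = 0 then 0 else -a k with hb
    have hb0 : b 0 ≤ 0 := by simp [hb]
    have hbdd' : ∃ M : ℝ, ∀ k, b k ≤ M := by
      obtain ⟨M, hM⟩ := hbdd
      refine ⟨M, fun k => ?_⟩
      by_cases hk : k = 0
      · simp [hb, hk]; exact le_trans (abs_nonneg (a 0)) (hM 0)
      · simp only [hb, if_neg hk]; linarith [hM k, neg_abs_le (a k)]
    have hrec : ∀ n : ℕ, 1 ≤ n → 0 < b n →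
        K * (2 * b n - b (n + 1) - b (n - 1)) + q0 * b n ≤ 0 := by
      intro n hn hbn
      have hn0 : n ≠ 0 := by omega
      have e := ha n hn
      have hcn := hcnn n hn
      have hf := hfpos n
      simp only [hb, if_neg hn0, if_neg (Nat.succ_ne_zero n)] at hbn ⊢
      rw [hq0]
      rcases eq_or_ne n 1 with h1 | h1
      · subst h1
        rw [if_pos rfl] at e
        rw [if_pos rfl]
        have hca : (1 - ρ^(2*1)) / (β * ((1:ℕ):ℝ) * (1 + ρ^(2*1))) * a 1 ≤ 0 :=
          mul_nonpos_of_nonneg_of_nonpos hcn (by linarith)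
        linarith [e, hf, hca]
      · rw [if_neg h1] at e
        rw [if_neg (by omega : ¬ n - 1 = 0)]
        have hca : (1 - ρ^(2*n)) / (β * (n:ℝ) * (1 + ρ^(2*n))) * a n ≤ 0 :=
          mul_nonpos_of_nonneg_of_nonpos hcn (by linarith)
        linarith [e, hf, hca]
    have hmb := maxprin11 K q0 hKpos hq0pos b hb0 hbdd' hrec
    intro n hn
    have := hmb n
    simp only [hb, if_neg (by omega : n ≠ 0)] at this
    linarith
  -- ============ supersolution ============
  set A := 2*r/(r+γ) with hA
  set R := 2*r*ρ*(max (r-γ) 0)/(r+γ) with hRdef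
  have hAnn : 0 ≤ A := div_nonneg (by linarith) hrγ.le
  have hA2 : A ≤ 2 := by rw [hA, div_le_iff₀ hrγ]; linarith
  have hmaxnn : (0:ℝ) ≤ max (r-γ) 0 := le_max_right _ _
  have hRnn : 0 ≤ R := by
    rw [hRdef]
    exact div_nonneg (mul_nonneg (mul_nonneg (by linarith : (0:ℝ) ≤ 2*r) hρ0.le) hmaxnn) hrγ.le
  have hR2 : R ≤ 2*r := by
    rw [hRdef, div_le_iff₀ hrγ]
    have h1 : max (r-γ) 0 ≤ r := max_le (by linarith) hr.le
    nlinarith [mul_le_mul_of_nonneg_left h1 (by linarith : (0:ℝ) ≤ 2*r),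
      mul_nonneg (mul_nonneg (by linarith : (0:ℝ) ≤ 2*r) hmaxnn) (by linarith : (0:ℝ) ≤ 1-ρ),
      mul_pos hr hγ]
  have hsup : ∀ n : ℕ, 1 ≤ n →
      2 * ρ ^ n / (1 + ρ ^ (2*n)) ≤
        K * ((2 * ((A*β*(n:ℝ)+R)*ρ^n) - (A*β*(((n+1:ℕ)):ℝ)+R)*ρ^(n+1)
              - (A*β*(((n-1:ℕ)):ℝ)+R)*ρ^(n-1)) + μ * ((A*β*(n:ℝ)+R)*ρ^n))
          + (1 - ρ^(2*n)) / (β * (n:ℝ) * (1 + ρ^(2*n))) * ((A*β*(n:ℝ)+R)*ρ^n) := by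
    intro n hn
    have hN1 : (1:ℝ) ≤ (n:ℝ) := by exact_mod_cast hn
    have hNne : (n:ℝ) ≠ 0 := by positivity
    have hpm : ρ^(n-1) * ρ = ρ^n := by
      rw [← pow_succ]; congr 1; omega
    have hqdef : ρ^(n-1) = ρ^n / ρ := by
      rw [eq_div_iff hρne]; exact hpm
    have hcast : (((n-1:ℕ)):ℝ) = (n:ℝ) - 1 := by
      rw [Nat.cast_sub hn]; norm_num
    have hcast2 : (((n+1:ℕ)):ℝ) = (n:ℝ) + 1 := by push_cast; ring
    have id1 : K * ((2 * ((A*β*(n:ℝ)+R)*ρ^n) - (A*β*(((n+1:ℕ)):ℝ)+R)*ρ^(n+1)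
              - (A*β*(((n-1:ℕ)):ℝ)+R)*ρ^(n-1)) + μ * ((A*β*(n:ℝ)+R)*ρ^n))
          = γ*A/r*ρ^n := by
      rw [hcast, hcast2, hK, hμ, hqdef, pow_succ]
      have h1 : γ*A/r*ρ^n = γ*A*((ρ⁻¹-ρ)/β)*ρ^n := by rw [hrel]; ring
      rw [h1]
      field_simp
      ring
    have hstar : 0 ≤ 2*β*(n:ℝ)*ρ^(2*n)*(γ-r)/(r+γ) + R*(1-ρ^(2*n)) := by
      rcases le_or_gt r γ with hcase | hcase
      · have hR0 : R = 0 := by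
          rw [hRdef, max_eq_right (by linarith : r-γ ≤ 0)]; ring
        rw [hR0]
        have h1 : 0 ≤ 2*β*(n:ℝ)*ρ^(2*n)*(γ-r) :=
          mul_nonneg (mul_nonneg (mul_nonneg (by linarith) (by linarith)) (hxnn n))
            (by linarith)
        linarith [div_nonneg h1 hrγ.le]
      · have hmax : max (r-γ) 0 = r-γ := max_eq_left (by linarith)
        obtain ⟨m, rfl⟩ : ∃ m, n = m + 1 := ⟨n-1, by omega⟩
        have hg := geomAux11 (ρ^2) (by positivity) (by nlinarith) m
        have e1 : (ρ^2)^(m+1) = (ρ^2)^m * ρ^2 := pow_succ _ _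
        have hgeo : (1-ρ^2)*((m:ℝ)+1)*(ρ^2)^(m+1) ≤ ρ^2*(1-(ρ^2)^(m+1)) := by
          calc (1-ρ^2)*((m:ℝ)+1)*(ρ^2)^(m+1)
              = ρ^2 * (((m:ℝ)+1)*(ρ^2)^m*(1-ρ^2)) := by rw [e1]; ring
            _ ≤ ρ^2 * (1 - (ρ^2)^(m+1)) := mul_le_mul_of_nonneg_left hg (sq_nonneg ρ)
        have hx3 : ρ^(2*(m+1)) = (ρ^2)^(m+1) := pow_mul ρ 2 (m+1)
        have hgeo' : (1-ρ^2)*((m:ℝ)+1)*ρ^(2*(m+1)) ≤ ρ^2*(1-ρ^(2*(m+1))) := by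
          rw [hx3]; exact hgeo
        have hβ2 : β*((m:ℝ)+1)*ρ^(2*(m+1)) ≤ r*ρ*(1-ρ^(2*(m+1))) := by
          have h4 : β*ρ*(((m:ℝ)+1)*ρ^(2*(m+1))) = r*(1-ρ^2)*(((m:ℝ)+1)*ρ^(2*(m+1))) := by
            rw [hbρ]
          have h5 : β*((m:ℝ)+1)*ρ^(2*(m+1))*ρ ≤ r*ρ*(1-ρ^(2*(m+1)))*ρ := by
            linarith [h4, mul_le_mul_of_nonneg_left hgeo' hr.le]
          exact le_of_mul_le_mul_right (by linarith) hρ0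
        rw [hRdef, hmax]
        have hnum : 0 ≤ 2*β*(((m+1:ℕ)):ℝ)*ρ^(2*(m+1))*(γ-r) + 2*r*ρ*(r-γ)*(1-ρ^(2*(m+1))) := by
          have hc3 : (((m+1:ℕ)):ℝ) = (m:ℝ)+1 := by push_cast; ring
          rw [hc3]
          nlinarith [mul_le_mul_of_nonneg_left hβ2 (by linarith : (0:ℝ) ≤ r-γ)]
        have heq : 2*β*(((m+1:ℕ)):ℝ)*ρ^(2*(m+1))*(γ-r)/(r+γ)
              + 2*r*ρ*(r-γ)/(r+γ)*(1-ρ^(2*(m+1)))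
            = (2*β*(((m+1:ℕ)):ℝ)*ρ^(2*(m+1))*(γ-r)
              + 2*r*ρ*(r-γ)*(1-ρ^(2*(m+1))))/(r+γ) := by ring
        linarith [div_nonneg hnum hrγ.le, heq]
    have key : 2*(β*(n:ℝ)) ≤ γ*A/r*(β*(n:ℝ))*(1+ρ^(2*n)) + (1-ρ^(2*n))*(A*β*(n:ℝ)+R) := by
      have hexp : γ*A/r*(β*(n:ℝ))*(1+ρ^(2*n)) + (1-ρ^(2*n))*(A*β*(n:ℝ)+R)
          = 2*(β*(n:ℝ)) + (2*β*(n:ℝ)*ρ^(2*n)*(γ-r)/(r+γ) + R*(1-ρ^(2*n))) := by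
        rw [hA]; field_simp; ring
      rw [hexp]; linarith [hstar]
    have hc1 : (0:ℝ) < 1 + ρ^(2*n) := by linarith [hxnn n]
    have hc2 : (0:ℝ) < β*(n:ℝ) := mul_pos hβ (by linarith)
    have hineq : 2*ρ^n/(1+ρ^(2*n)) ≤ γ*A/r*ρ^n
        + (1-ρ^(2*n))/(β*(n:ℝ)*(1+ρ^(2*n)))*((A*β*(n:ℝ)+R)*ρ^n) := by
      have hfact : (0:ℝ) ≤ ρ^n/((1+ρ^(2*n))*(β*(n:ℝ))) :=
        div_nonneg (pow_nonneg hρ0.le n) (by nlinarith)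
      calc 2*ρ^n/(1+ρ^(2*n))
          = 2*(β*(n:ℝ))*(ρ^n/((1+ρ^(2*n))*(β*(n:ℝ)))) := by
            field_simp
        _ ≤ (γ*A/r*(β*(n:ℝ))*(1+ρ^(2*n)) + (1-ρ^(2*n))*(A*β*(n:ℝ)+R))
              *(ρ^n/((1+ρ^(2*n))*(β*(n:ℝ)))) := mul_le_mul_of_nonneg_right key hfact
        _ = γ*A/r*ρ^n + (1-ρ^(2*n))/(β*(n:ℝ)*(1+ρ^(2*n)))*((A*β*(n:ℝ)+R)*ρ^n) := by
            field_simp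
    rw [id1]
    exact hineq
  -- ============ upper bound ============
  have hHnn : ∀ k : ℕ, 0 ≤ (A*β*(k:ℝ)+R)*ρ^k := fun k =>
    mul_nonneg (add_nonneg (mul_nonneg (mul_nonneg hAnn hβ.le) (Nat.cast_nonneg k)) hRnn)
      (pow_nonneg hρ0.le k)
  have hup : ∀ n : ℕ, 1 ≤ n → a n ≤ (A*β*(n:ℝ)+R)*ρ^n := by
    set b : ℕ → ℝ := fun k => if k = 0 then 0 else a k - (A*β*(k:ℝ)+R)*ρ^k with hb
    have hb0 : b 0 ≤ 0 := by simp [hb]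
    have hbdd' : ∃ M : ℝ, ∀ k, b k ≤ M := by
      obtain ⟨M, hM⟩ := hbdd
      refine ⟨M, fun k => ?_⟩
      by_cases hk : k = 0
      · simp [hb, hk]; exact le_trans (abs_nonneg (a 0)) (hM 0)
      · simp only [hb, if_neg hk]
        linarith [hM k, le_abs_self (a k), hHnn k]
    have hrec : ∀ n : ℕ, 1 ≤ n → 0 < b n →
        K * (2 * b n - b (n + 1) - b (n - 1)) + q0 * b n ≤ 0 := by
      intro n hn hbn
      have hn0 : n ≠ 0 := by omega
      have e := ha n hn
      have s := hsup n hn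
      have hcn := hcnn n hn
      simp only [hb, if_neg hn0, if_neg (Nat.succ_ne_zero n)] at hbn ⊢
      rw [hq0]
      rcases eq_or_ne n 1 with h1 | h1
      · subst h1
        rw [if_pos rfl] at e
        rw [if_pos rfl]
        have hKR : 0 ≤ K*((A*β*(((0:ℕ)):ℝ)+R)*ρ^(0:ℕ)) := mul_nonneg hKpos.le (hHnn 0)
        have hcb : 0 ≤ (1 - ρ^(2*1)) / (β * ((1:ℕ):ℝ) * (1 + ρ^(2*1)))
            * (a 1 - (A*β*((1:ℕ):ℝ)+R)*ρ^(1:ℕ)) := mul_nonneg hcn (le_of_lt hbn)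
        have s1 := s
        norm_num at s1 e hcb hKR ⊢
        linarith [e, s1, hcb, hKR]
      · rw [if_neg h1] at e
        rw [if_neg (by omega : ¬ n - 1 = 0)]
        have hcb : 0 ≤ (1 - ρ^(2*n)) / (β * (n:ℝ) * (1 + ρ^(2*n)))
            * (a n - (A*β*(n:ℝ)+R)*ρ^n) := mul_nonneg hcn (le_of_lt hbn)
        linarith [e, s, hcb]
    have hmb := maxprin11 K q0 hKpos hq0pos b hb0 hbdd' hrec
    intro n hn
    have := hmb n
    simp only [hb, if_neg (by omega : n ≠ 0)] at this
    linarith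
  -- ============ conclusion ============
  intro n hn
  refine ⟨hlow n hn, ?_⟩
  have h2 := hup n hn
  have hp := pow_nonneg hρ0.le n
  have hbn' : (0:ℝ) ≤ β*(n:ℝ) := mul_nonneg hβ.le (Nat.cast_nonneg n)
  have h3 : A*β*(n:ℝ)+R ≤ 2*(β*(n:ℝ)+r) := by
    nlinarith [mul_le_mul_of_nonneg_right hA2 hbn']
  nlinarith [mul_le_mul_of_nonneg_right h3 hp]
end

section
/- Let 0 < ρ < 1 and ζ ∈ ℂ with |ζ| ≤ ρ⁻¹. Then |Σ_{n≥2} (Δ_D g)(n) ζⁿ| ≤ 8, where g(n) = nρ^{2n}/(1+ρ^{2n}) and (Δ_D g)(n) = g(n+1) + g(n-1) - 2g(n) for n ≥ 2. -/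
lemma key_bound (ρ x n : ℝ) (hρ0 : 0 < ρ) (hρ1 : ρ < 1) (hx0 : 0 < x) (hx1 : x < 1)
    (hn : 0 ≤ n) :
    |(n+1)*(x*ρ^4)/(1+x*ρ^4) + (n-1)*x/(1+x) - 2*n*(x*ρ^2)/(1+x*ρ^2)|
      ≤ n*x*(1-ρ^2)^2 + x*(1-ρ^4) := by
  have hρ2 : ρ^2 < 1 := by nlinarith
  have hρ4 : ρ^4 < 1 := by nlinarith
  have h1 : (0:ℝ) < 1 + x*ρ^4 := by positivity
  have h2 : (0:ℝ) < 1 + x := by positivity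
  have h3 : (0:ℝ) < 1 + x*ρ^2 := by positivity
  have hxr : x*ρ^2 < 1 := by nlinarith
  have hAnum : 0 ≤ n*x*(1-ρ^2)^2*(1-x*ρ^2) := by
    apply mul_nonneg (by positivity); linarith
  have hA0 : 0 ≤ n*x*(1-ρ^2)^2*(1-x*ρ^2) / ((1+x*ρ^4)*(1+x)*(1+x*ρ^2)) :=
    div_nonneg hAnum (by positivity)
  have hA1 : n*x*(1-ρ^2)^2*(1-x*ρ^2) / ((1+x*ρ^4)*(1+x)*(1+x*ρ^2)) ≤ n*x*(1-ρ^2)^2 := by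
    rw [div_le_iff₀ (by positivity)]
    have p1 : (0:ℝ) ≤ x*ρ^4 := by positivity
    have p2 : (0:ℝ) ≤ x*ρ^2 := by positivity
    have hD : (1:ℝ) - x*ρ^2 ≤ (1+x*ρ^4)*(1+x)*(1+x*ρ^2) := by
      nlinarith [mul_nonneg p1 hx0.le, mul_nonneg p1 p2, mul_nonneg hx0.le p2,
        mul_nonneg (mul_nonneg p1 hx0.le) p2]
    calc n*x*(1-ρ^2)^2*(1-x*ρ^2) ≤ n*x*(1-ρ^2)^2*((1+x*ρ^4)*(1+x)*(1+x*ρ^2)) :=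
          mul_le_mul_of_nonneg_left hD (by positivity)
      _ = n*x*(1-ρ^2)^2 * ((1+x*ρ^4)*(1+x)*(1+x*ρ^2)) := by ring
  have hB0 : 0 ≤ x*(1-ρ^4) / ((1+x*ρ^4)*(1+x)) := by
    apply div_nonneg _ (by positivity)
    apply mul_nonneg hx0.le; linarith
  have hB1 : x*(1-ρ^4) / ((1+x*ρ^4)*(1+x)) ≤ x*(1-ρ^4) := by
    rw [div_le_iff₀ (by positivity)]
    have p1 : (0:ℝ) ≤ x*ρ^4 := by positivity
    have hD : (1:ℝ) ≤ (1+x*ρ^4)*(1+x) := by nlinarith [mul_nonneg p1 hx0.le]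
    calc x*(1-ρ^4) = x*(1-ρ^4)*1 := by ring
      _ ≤ x*(1-ρ^4)*((1+x*ρ^4)*(1+x)) := by
          apply mul_le_mul_of_nonneg_left hD
          apply mul_nonneg hx0.le; linarith
  have hid : (n+1)*(x*ρ^4)/(1+x*ρ^4) + (n-1)*x/(1+x) - 2*n*(x*ρ^2)/(1+x*ρ^2)
      = n*x*(1-ρ^2)^2*(1-x*ρ^2) / ((1+x*ρ^4)*(1+x)*(1+x*ρ^2))
        - x*(1-ρ^4) / ((1+x*ρ^4)*(1+x)) := by
    field_simp
    ring
  rw [hid, abs_sub_le_iff]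
  constructor <;> [skip; skip] <;> nlinarith

/-- For `g(n) = nρ^{2n}/(1+ρ^{2n})` and `|ζ| ≤ ρ⁻¹`,
`|Σ_{n≥2} (Δ_D g)(n) ζⁿ| ≤ 8`, where `(Δ_D g)(n) = g(n+1) + g(n-1) - 2g(n)`.
(The sum over `n ≥ 2` is written with the shifted index `n = k + 2`, `k ∈ ℕ`.) -/
theorem stmt_13 (ρ : ℝ) (hρ0 : 0 < ρ) (hρ1 : ρ < 1) (g : ℕ → ℝ)
    (hg : ∀ n : ℕ, g n = (n : ℝ) * ρ ^ (2 * n) / (1 + ρ ^ (2 * n)))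
    (ζ : ℂ) (hζ : ‖ζ‖ ≤ ρ⁻¹) :
    ‖∑' k : ℕ, ((g (k + 3) + g (k + 1) - 2 * g (k + 2) : ℝ) : ℂ) * ζ ^ (k + 2)‖ ≤ 8 := by
  have hρne : ρ ≠ 0 := hρ0.ne'
  obtain ⟨c, hc⟩ : ∃ c : ℝ, c = (1-ρ^2)^2 := ⟨_, rfl⟩
  obtain ⟨d, hd⟩ : ∃ d : ℝ, d = 1-ρ^4 := ⟨_, rfl⟩
  have hc0 : 0 ≤ c := by rw [hc]; positivity
  have hd0 : 0 ≤ d := by rw [hd]; nlinarith [pow_lt_one₀ hρ0.le hρ1 (show (4:ℕ) ≠ 0 by norm_num)]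
  have hρn : ‖ρ‖ < 1 := by rw [Real.norm_eq_abs, abs_of_pos hρ0]; exact hρ1
  have hs1 : HasSum (fun k : ℕ => (k:ℝ) * ρ^k) (ρ / (1-ρ)^2) :=
    hasSum_coe_mul_geometric_of_norm_lt_one hρn
  have hs2 : HasSum (fun k : ℕ => ρ^k) ((1-ρ)⁻¹) := hasSum_geometric_of_lt_one hρ0.le hρ1
  have hS : HasSum (fun k : ℕ => c * ((k:ℝ) * ρ^k) + (2*c+d) * ρ^k)
      (c * (ρ / (1-ρ)^2) + (2*c+d) * (1-ρ)⁻¹) := (hs1.mul_left c).add (hs2.mul_left _)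
  have hval : c * (ρ / (1-ρ)^2) + (2*c+d) * (1-ρ)⁻¹ ≤ 8 := by
    have h1 : (0:ℝ) < 1 - ρ := by linarith
    rw [div_eq_mul_inv, ← mul_assoc]
    have e1 : c * ρ * ((1-ρ)^2)⁻¹ = ρ * (1+ρ)^2 := by
      rw [hc]; field_simp; ring
    have e2 : (2*c+d) * (1-ρ)⁻¹ = 2*(1-ρ)*(1+ρ)^2 + (1+ρ)*(1+ρ^2) := by
      rw [hc, hd]; field_simp; ring
    rw [e1, e2]
    nlinarith
  refine le_trans (tsum_of_norm_bounded hS ?_) hval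
  intro k
  rw [norm_mul, norm_pow, Complex.norm_real, Real.norm_eq_abs]
  obtain ⟨x, hx⟩ : ∃ x : ℝ, x = ρ^(2*k+2) := ⟨_, rfl⟩
  have hx0 : 0 < x := by rw [hx]; positivity
  have hx1 : x < 1 := hx ▸ pow_lt_one₀ hρ0.le hρ1 (by omega)
  have hgr : |g (k+3) + g (k+1) - 2 * g (k+2)| ≤ ((k:ℝ)+2)*x*c + x*d := by
    have e3 : ρ^(2*(k+3)) = x*ρ^4 := by rw [hx, ← pow_add]; ring_nf
    have e1 : ρ^(2*(k+1)) = x := by rw [hx]; ring_nf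
    have e2 : ρ^(2*(k+2)) = x*ρ^2 := by rw [hx, ← pow_add]; ring_nf
    have hkb := key_bound ρ x ((k:ℝ)+2) hρ0 hρ1 hx0 hx1 (by positivity)
    rw [hg, hg, hg, e1, e2, e3]
    rw [hc, hd]
    push_cast
    convert hkb using 3 <;> ring
  have hζ' : ‖ζ‖ ^ (k+2) ≤ (ρ⁻¹)^(k+2) :=
    pow_le_pow_left₀ (norm_nonneg ζ) hζ _
  have hpk : x * (ρ⁻¹)^(k+2) = ρ^k := by
    rw [hx, inv_pow]
    rw [show 2*k+2 = k + (k+2) by ring, pow_add]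
    field_simp
  calc |g (k+3) + g (k+1) - 2 * g (k+2)| * ‖ζ‖ ^ (k+2)
      ≤ (((k:ℝ)+2)*x*c + x*d) * (ρ⁻¹)^(k+2) := by
        apply mul_le_mul hgr hζ' (by positivity) ?_
        have : 0 ≤ ((k:ℝ)+2)*x*c := by positivity
        nlinarith [mul_nonneg hx0.le hd0]
    _ = (((k:ℝ)+2)*c + d) * (x * (ρ⁻¹)^(k+2)) := by ring
    _ = (((k:ℝ)+2)*c + d) * ρ^k := by rw [hpk]
    _ = c * ((k:ℝ) * ρ^k) + (2*c+d) * ρ^k := by ring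
end

section
/- Let 0 < ρ < 1. For n ≥ 2, |(Δ_D h)(n)| ≤ 3(1-ρ)² ρ^{n-1}, where h(n) = ρⁿ/(1+ρ^{2n}) and (Δ_D h)(n) = h(n+1) + h(n-1) - 2h(n). -/
/-- For `h(n) = ρⁿ/(1+ρ^{2n})` with `0 < ρ < 1` and `n ≥ 2`,
`|(Δ_D h)(n)| = |h(n+1) + h(n-1) - 2h(n)| ≤ 3(1-ρ)² ρ^{n-1}`. -/
theorem stmt_14 (ρ : ℝ) (hρ0 : 0 < ρ) (hρ1 : ρ < 1) (h : ℕ → ℝ)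
    (hh : ∀ n : ℕ, h n = ρ ^ n / (1 + ρ ^ (2 * n))) :
    ∀ n : ℕ, 2 ≤ n →
      |h (n + 1) + h (n - 1) - 2 * h n| ≤ 3 * (1 - ρ) ^ 2 * ρ ^ (n - 1) := by
  intro n hn
  obtain ⟨m, rfl⟩ : ∃ m, n = m + 2 := ⟨n - 2, by omega⟩
  set u : ℝ := ρ ^ m with hu
  have hu0 : 0 < u := pow_pos hρ0 m
  have hu1 : u ≤ 1 := pow_le_one₀ hρ0.le hρ1.le
  have e1 : h (m + 2 + 1) = u * ρ ^ 3 / (1 + u ^ 2 * ρ ^ 6) := by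
    rw [hh, show m + 2 + 1 = m + 3 from rfl, show 2 * (m + 3) = m * 2 + 6 by ring,
      pow_add, pow_add, pow_mul, hu]
  have e2 : h (m + 2 - 1) = u * ρ / (1 + u ^ 2 * ρ ^ 2) := by
    rw [hh, show m + 2 - 1 = m + 1 from rfl, show 2 * (m + 1) = m * 2 + 2 by ring,
      pow_add, pow_add, pow_mul, pow_one, hu]
  have e3 : h (m + 2) = u * ρ ^ 2 / (1 + u ^ 2 * ρ ^ 4) := by
    rw [hh, show 2 * (m + 2) = m * 2 + 4 by ring, pow_add, pow_add, pow_mul, hu]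
  have e4 : (ρ : ℝ) ^ (m + 2 - 1) = u * ρ := by
    rw [show m + 2 - 1 = m + 1 from rfl, pow_add, pow_one, hu]
  rw [e1, e2, e3, e4]
  have hD1 : (0:ℝ) < 1 + u ^ 2 * ρ ^ 6 := by positivity
  have hD2 : (0:ℝ) < 1 + u ^ 2 * ρ ^ 2 := by positivity
  have hD0 : (0:ℝ) < 1 + u ^ 2 * ρ ^ 4 := by positivity
  have hv0 : (0:ℝ) ≤ u ^ 2 * ρ ^ 2 := by positivity
  have hv1 : u ^ 2 * ρ ^ 2 ≤ 1 := by
    calc u ^ 2 * ρ ^ 2 = (u * ρ) ^ 2 := by ring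
      _ ≤ 1 ^ 2 := by
          have huρ : u * ρ ≤ 1 := by nlinarith
          exact pow_le_pow_left₀ (by positivity) huρ 2
      _ = 1 := one_pow 2
  have key : u * ρ ^ 3 / (1 + u ^ 2 * ρ ^ 6) + u * ρ / (1 + u ^ 2 * ρ ^ 2)
      - 2 * (u * ρ ^ 2 / (1 + u ^ 2 * ρ ^ 4))
      = (u * ρ * (1 - ρ) ^ 2)
        * ((1 - 2 * ρ * (1 + ρ + ρ ^ 2) * (u ^ 2 * ρ ^ 2) + ρ ^ 4 * (u ^ 2 * ρ ^ 2) ^ 2)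
          / ((1 + u ^ 2 * ρ ^ 6) * (1 + u ^ 2 * ρ ^ 2) * (1 + u ^ 2 * ρ ^ 4))) := by
    field_simp
    ring
  rw [key, abs_mul, abs_of_nonneg (by positivity : (0:ℝ) ≤ u * ρ * (1 - ρ) ^ 2)]
  have hQ : |(1 - 2 * ρ * (1 + ρ + ρ ^ 2) * (u ^ 2 * ρ ^ 2) + ρ ^ 4 * (u ^ 2 * ρ ^ 2) ^ 2)
      / ((1 + u ^ 2 * ρ ^ 6) * (1 + u ^ 2 * ρ ^ 2) * (1 + u ^ 2 * ρ ^ 4))| ≤ 3 := by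
    have hprod : (0:ℝ) < (1 + u ^ 2 * ρ ^ 6) * (1 + u ^ 2 * ρ ^ 2) * (1 + u ^ 2 * ρ ^ 4) := by
      positivity
    rw [abs_div, abs_of_pos hprod, div_le_iff₀ hprod, abs_le]
    have h1 : (1:ℝ) ≤ 1 + u ^ 2 * ρ ^ 6 := le_add_of_nonneg_right (by positivity)
    have h0 : (1:ℝ) ≤ 1 + u ^ 2 * ρ ^ 4 := le_add_of_nonneg_right (by positivity)
    have h2 : (1:ℝ) ≤ 1 + u ^ 2 * ρ ^ 2 := le_add_of_nonneg_right (by positivity)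
    have hDge : 1 + u ^ 2 * ρ ^ 2 ≤
        (1 + u ^ 2 * ρ ^ 6) * (1 + u ^ 2 * ρ ^ 2) * (1 + u ^ 2 * ρ ^ 4) := by
      calc 1 + u ^ 2 * ρ ^ 2 = 1 * (1 + u ^ 2 * ρ ^ 2) * 1 := by ring
        _ ≤ (1 + u ^ 2 * ρ ^ 6) * (1 + u ^ 2 * ρ ^ 2) * (1 + u ^ 2 * ρ ^ 4) := by
            gcongr
    have hρ2 : ρ ^ 2 ≤ 1 := pow_le_one₀ hρ0.le hρ1.le
    have hρ3 : ρ ^ 3 ≤ 1 := pow_le_one₀ hρ0.le hρ1.le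
    have hρ4 : ρ ^ 4 ≤ 1 := pow_le_one₀ hρ0.le hρ1.le
    have hv2 : (u ^ 2 * ρ ^ 2) ^ 2 ≤ 1 := pow_le_one₀ hv0 hv1
    have t1 : ρ * (u ^ 2 * ρ ^ 2) ≤ u ^ 2 * ρ ^ 2 := mul_le_of_le_one_left hv0 hρ1.le
    have t2 : ρ ^ 2 * (u ^ 2 * ρ ^ 2) ≤ u ^ 2 * ρ ^ 2 := mul_le_of_le_one_left hv0 hρ2
    have t3 : ρ ^ 3 * (u ^ 2 * ρ ^ 2) ≤ u ^ 2 * ρ ^ 2 := mul_le_of_le_one_left hv0 hρ3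
    have t4 : ρ ^ 4 * (u ^ 2 * ρ ^ 2) ^ 2 ≤ 1 := by
      calc ρ ^ 4 * (u ^ 2 * ρ ^ 2) ^ 2 ≤ 1 * 1 :=
            mul_le_mul hρ4 hv2 (by positivity) one_pos.le
        _ = 1 := one_mul 1
    have t5 : 0 ≤ ρ ^ 4 * (u ^ 2 * ρ ^ 2) ^ 2 := by positivity
    have t6 : 0 ≤ 2 * ρ * (1 + ρ + ρ ^ 2) * (u ^ 2 * ρ ^ 2) := by positivity
    constructor
    · linarith [hv1, hDge, t1, t2, t3, t5]
    · linarith [hv1, hDge, t4, t6]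
  calc u * ρ * (1 - ρ) ^ 2 * |(1 - 2 * ρ * (1 + ρ + ρ ^ 2) * (u ^ 2 * ρ ^ 2) + ρ ^ 4 * (u ^ 2 * ρ ^ 2) ^ 2)
      / ((1 + u ^ 2 * ρ ^ 6) * (1 + u ^ 2 * ρ ^ 2) * (1 + u ^ 2 * ρ ^ 4))|
      ≤ u * ρ * (1 - ρ) ^ 2 * 3 := by
        exact mul_le_mul_of_nonneg_left hQ (by positivity)
    _ = 3 * (1 - ρ) ^ 2 * (u * ρ) := by ring
end

section
/- Let 0 < ρ < 1, β, γ, r > 0 with (ρ⁻¹ - ρ)/β = 1/r, and let a be a bounded real sequence satisfying a(n+1) + a(n-1) - (ρ + ρ⁻¹)a(n) = (β²/γ)(Va(n) - f(n)) for n ≥ 1 (with a(0) = 0), where Va(n) + f(n) ≤ 6ρⁿ and Va(n), f(n) ≥ 0. Then for n ≥ 2, a(n) = -(rβρ^{-n}/γ) Σ_{k≥n} ρᵏ(Va(k) - f(k)) + (rβρⁿ/γ)(Σ_{k≥1} ρᵏ(Va(k) - f(k)) - Σ_{k=1}^{n-1} ρ^{-k}(Va(k) - f(k))), and moreover a(1)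 + (β²/γ)Σ_{k≥1} ρᵏ(Va(k) - f(k)) = 0. -/
/-- Variation-of-constants representation for the bounded solution of the recursion
`a(n+1) + a(n-1) - (ρ + ρ⁻¹)a(n) = (β²/γ)(Va(n) - f(n))` (with `a(0) = 0`):
boundedness forces `a(1) + (β²/γ) Σ_{k≥1} ρᵏ(Va(k) - f(k)) = 0`, and for `n ≥ 2`,
`a(n) = -(rβρ^{-n}/γ) Σ_{k≥n} ρᵏ(Va(k) - f(k))
  + (rβρⁿ/γ)(Σ_{k≥1} ρᵏ(Va(k) - f(k)) - Σ_{k=1}^{n-1} ρ^{-k}(Va(k) - f(k)))`. -/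
theorem stmt_16 (ρ β γ r : ℝ) (hρ0 : 0 < ρ) (hρ1 : ρ < 1) (hβ : 0 < β) (hγ : 0 < γ)
    (hr : 0 < r) (hrel : (ρ⁻¹ - ρ) / β = 1 / r)
    (a Va f : ℕ → ℝ) (ha0 : a 0 = 0) (hbdd : ∃ M : ℝ, ∀ n, |a n| ≤ M)
    (hVa : ∀ n : ℕ, 1 ≤ n → 0 ≤ Va n) (hf : ∀ n : ℕ, 1 ≤ n → 0 ≤ f n)
    (hVf : ∀ n : ℕ, 1 ≤ n → Va n + f n ≤ 6 * ρ ^ n)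
    (hrec : ∀ n : ℕ, 1 ≤ n →
      a (n + 1) + a (n - 1) - (ρ + ρ⁻¹) * a n = β ^ 2 / γ * (Va n - f n)) :
    a 1 + β ^ 2 / γ * (∑' k : ℕ, ρ ^ (k + 1) * (Va (k + 1) - f (k + 1))) = 0 ∧
    ∀ n : ℕ, 2 ≤ n →
      a n = -(r * β * (ρ⁻¹) ^ n / γ) * (∑' k : ℕ, ρ ^ (n + k) * (Va (n + k) - f (n + k)))
        + r * β * ρ ^ n / γ *
            ((∑' k : ℕ, ρ ^ (k + 1) * (Va (k + 1) - f (k + 1)))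
              - ∑ k ∈ Finset.Icc 1 (n - 1), (ρ⁻¹) ^ k * (Va k - f k)) := by
  have hρne : ρ ≠ 0 := ne_of_gt hρ0
  have hγne : γ ≠ 0 := ne_of_gt hγ
  have hrβ : r * (ρ⁻¹ - ρ) = β := by
    have hβne : β ≠ 0 := ne_of_gt hβ
    have hrne : r ≠ 0 := ne_of_gt hr
    field_simp at hrel ⊢
    linear_combination hrel
  set w : ℕ → ℝ := fun k => ρ ^ k * (Va k - f k) with hwdef
  -- summability
  have hρ2 : ρ ^ 2 < 1 := by nlinarith
  have hρ2nonneg : (0:ℝ) ≤ ρ ^ 2 := sq_nonneg ρ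
  have hgeo : Summable (fun k : ℕ => 6 * (ρ ^ 2) ^ k) :=
    (summable_geometric_of_lt_one hρ2nonneg hρ2).mul_left 6
  have hwbound : ∀ k : ℕ, 1 ≤ k → |w k| ≤ 6 * (ρ ^ 2) ^ k := by
    intro k hk
    have h1 : |Va k - f k| ≤ 6 * ρ ^ k := by
      have h2 := hVf k hk; have h3 := hVa k hk; have h4 := hf k hk
      rw [abs_sub_le_iff]
      constructor <;> linarith
    have hpk : (0:ℝ) ≤ ρ ^ k := le_of_lt (pow_pos hρ0 k)
    calc |w k| = ρ ^ k * |Va k - f k| := by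
          rw [hwdef]; rw [abs_mul, abs_of_nonneg hpk]
      _ ≤ ρ ^ k * (6 * ρ ^ k) := mul_le_mul_of_nonneg_left h1 hpk
      _ = 6 * (ρ ^ 2) ^ k := by ring
  have hw1 : Summable (fun k : ℕ => w (k + 1)) := by
    apply Summable.of_norm
    apply Summable.of_nonneg_of_le (fun k => norm_nonneg _) (fun k => ?_) hgeo
    have h1 := hwbound (k + 1) (Nat.le_add_left 1 k)
    have h2 : (ρ ^ 2) ^ (k + 1) ≤ (ρ ^ 2) ^ k :=
      pow_le_pow_of_le_one hρ2nonneg (le_of_lt hρ2) (Nat.le_succ k)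
    calc ‖w (k + 1)‖ = |w (k + 1)| := rfl
      _ ≤ 6 * (ρ ^ 2) ^ (k + 1) := h1
      _ ≤ 6 * (ρ ^ 2) ^ k := by nlinarith
  have hw : Summable w := (summable_nat_add_iff 1).mp hw1
  have hTs : ∀ n : ℕ, Summable (fun k => w (n + k)) := fun n =>
    ((summable_nat_add_iff n).2 hw).congr (fun k => by rw [add_comm])
  set T : ℕ → ℝ := fun n => ∑' k : ℕ, w (n + k) with hTdef
  have htail : ∀ n : ℕ, T n = w n + T (n + 1) := by
    intro n
    have h := Summable.tsum_eq_zero_add (hTs n)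
    simp only [add_zero] at h
    rw [hTdef]
    simp only
    rw [h]
    congr 1
    exact tsum_congr fun k => congrArg w (by omega)
  have hTel : ∀ n : ℕ, T 1 = (∑ k ∈ Finset.Icc 1 n, w k) + T (n + 1) := by
    intro n
    induction n with
    | zero => simp
    | succ n ih =>
      rw [Finset.sum_Icc_succ_top (Nat.succ_le_succ (Nat.zero_le n)), ih, htail (n + 1)]
      ring
  -- recursion for b n = a (n+1) - ρ a n
  have hinv : ρ * ρ⁻¹ = 1 := mul_inv_cancel₀ hρne
  have hb : ∀ m : ℕ, a (m + 2) - ρ * a (m + 1)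
      = ρ⁻¹ * (a (m + 1) - ρ * a m) + β ^ 2 / γ * (Va (m + 1) - f (m + 1)) := by
    intro m
    have h := hrec (m + 1) (Nat.le_add_left 1 m)
    simp only [Nat.add_sub_cancel] at h
    linear_combination h + a m * (mul_inv_cancel₀ hρne)
  have hbf : ∀ n : ℕ, ρ ^ n * (a (n + 1) - ρ * a n)
      = a 1 + β ^ 2 / γ * ∑ k ∈ Finset.Icc 1 n, w k := by
    intro n
    induction n with
    | zero => simp [ha0]
    | succ n ih =>
      rw [hb n, Finset.sum_Icc_succ_top (Nat.succ_le_succ (Nat.zero_le n))]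
      simp only [hwdef]
      linear_combination ih + ρ ^ n * (a (n + 1) - ρ * a n) * hinv
  obtain ⟨M, hM⟩ := hbdd
  have hM0 : 0 ≤ M := le_trans (abs_nonneg _) (hM 0)
  have hlim1 : Filter.Tendsto (fun n => ρ ^ n * (a (n + 1) - ρ * a n))
      Filter.atTop (nhds 0) := by
    have htd : Filter.Tendsto (fun n : ℕ => ((1 + ρ) * M) * ρ ^ n) Filter.atTop (nhds 0) := by
      have h := (tendsto_pow_atTop_nhds_zero_of_lt_one (le_of_lt hρ0) hρ1).const_mul
        ((1 + ρ) * M)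
      simpa using h
    refine squeeze_zero_norm (fun n => ?_) htd
    · have h1 := abs_le.mp (hM (n + 1))
      have h2 := abs_le.mp (hM n)
      have h3 : |a (n + 1) - ρ * a n| ≤ (1 + ρ) * M := by
        rw [abs_le]; constructor <;> nlinarith
      have hpk : (0:ℝ) ≤ ρ ^ n := le_of_lt (pow_pos hρ0 n)
      rw [norm_mul, norm_pow, Real.norm_eq_abs, Real.norm_eq_abs, abs_of_pos hρ0]
      calc ρ ^ n * |a (n + 1) - ρ * a n| ≤ ρ ^ n * ((1 + ρ) * M) :=
            mul_le_mul_of_nonneg_left h3 hpk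
        _ = (1 + ρ) * M * ρ ^ n := by ring
  have hIcc : ∀ n : ℕ, ∑ k ∈ Finset.Icc 1 n, w k = ∑ k ∈ Finset.range n, w (1 + k) := by
    intro n
    induction n with
    | zero => simp
    | succ n ih =>
      rw [Finset.sum_Icc_succ_top (Nat.succ_le_succ (Nat.zero_le n)), ih,
        Finset.sum_range_succ]
      congr 1
      rw [add_comm]
  have hlim2 : Filter.Tendsto (fun n => a 1 + β ^ 2 / γ * ∑ k ∈ Finset.Icc 1 n, w k)
      Filter.atTop (nhds (a 1 + β ^ 2 / γ * T 1)) := by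
    simp only [hIcc]
    exact tendsto_const_nhds.add (((hTs 1).hasSum.tendsto_sum_nat).const_mul _)
  have hzero : a 1 + β ^ 2 / γ * T 1 = 0 := by
    refine tendsto_nhds_unique hlim2 ?_
    exact hlim1.congr (fun n => hbf n)
  have hbT : ∀ n : ℕ, a (n + 1) - ρ * a n = -(β ^ 2 / γ * ρ⁻¹ ^ n * T (n + 1)) := by
    intro n
    have h3 : ρ⁻¹ ^ n * ρ ^ n = 1 := by rw [← mul_pow, inv_mul_cancel₀ hρne, one_pow]
    have hsum : ∑ k ∈ Finset.Icc 1 n, w k = T 1 - T (n + 1) := by linarith [hTel n]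
    calc a (n + 1) - ρ * a n = ρ⁻¹ ^ n * (ρ ^ n * (a (n + 1) - ρ * a n)) := by
          rw [← mul_assoc, h3, one_mul]
      _ = ρ⁻¹ ^ n * (a 1 + β ^ 2 / γ * (T 1 - T (n + 1))) := by rw [hbf n, hsum]
      _ = -(β ^ 2 / γ * ρ⁻¹ ^ n * T (n + 1)) := by linear_combination ρ⁻¹ ^ n * hzero
  have hmain : ∀ m : ℕ, a (m + 1) = -(r * β * ρ⁻¹ ^ (m + 1) / γ) * T (m + 1)
      + r * β * ρ ^ (m + 1) / γ *
        (T 1 - ∑ k ∈ Finset.Icc 1 m, ρ⁻¹ ^ k * (Va k - f k)) := by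
    intro m
    induction m with
    | zero =>
      rw [show (Finset.Icc 1 0 : Finset ℕ) = ∅ from rfl, Finset.sum_empty]
      linear_combination hzero + T 1 * β / γ * hrβ
    | succ m ih =>
      have hstep : a (m + 2) = ρ * a (m + 1) + (a (m + 2) - ρ * a (m + 1)) := by ring
      rw [hstep, hbT (m + 1), ih, htail (m + 1),
        Finset.sum_Icc_succ_top (Nat.succ_le_succ (Nat.zero_le m))]
      simp only [hwdef]
      linear_combination (ρ⁻¹ ^ (m + 1) * T (m + 2) * β / γ) * hrβ
  constructor
  · have hT1 : T 1 = ∑' k : ℕ, ρ ^ (k + 1) * (Va (k + 1) - f (k + 1)) := by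
      rw [hTdef]
      exact tsum_congr fun k => by rw [hwdef]; simp [add_comm 1 k]
    rw [← hT1]
    linarith [hzero]
  · intro n hn
    obtain ⟨m, rfl⟩ : ∃ m, n = m + 1 := ⟨n - 1, by omega⟩
    have hTn : T (m + 1) = ∑' k : ℕ, ρ ^ (m + 1 + k) * (Va (m + 1 + k) - f (m + 1 + k)) := by
      rw [hTdef]
    have hT1 : T 1 = ∑' k : ℕ, ρ ^ (k + 1) * (Va (k + 1) - f (k + 1)) := by
      rw [hTdef]
      exact tsum_congr fun k => by rw [hwdef]; simp [add_comm 1 k]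
    have h := hmain m
    rw [hTn, hT1] at h
    simpa using h
end

section
/- Let 0 < ρ < 1, β, γ, r > 0 with (ρ⁻¹-ρ)/β = 1/r, μ = ρ + ρ⁻¹ - 2, and let a be the bounded real solution of (γ/β²)(-Δ_D a + μa) + Va = f as above. Then |a(n+1) + a(n-1) - 2a(n)| ≤ 2(1-ρ)²(βn + r)ρ^{n-1} + 6β²ρⁿ/γ for all n ≥ 2. -/
section helpers

private lemma geom_aux (ρ : ℝ) (h0 : 0 < ρ) (h1 : ρ < 1) :
    ∀ n : ℕ, (n : ℝ) * (1 - ρ ^ 2) * ρ ^ (2 * n) ≤ ρ * (1 - ρ ^ (2 * n)) := by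
  intro n
  induction n with
  | zero => simp
  | succ k ih =>
    have hp : 0 < ρ ^ (2 * k) := pow_pos h0 _
    have hle1 : ρ ^ (2 * k) ≤ 1 := pow_le_one₀ h0.le h1.le
    rw [show 2 * (k + 1) = 2 * k + 2 by ring, pow_add]
    push_cast
    have hsq : (0:ℝ) ≤ 1 - ρ ^ 2 := by nlinarith
    have h1s : ρ ^ (2 * k) * ρ ^ 2 ≤ ρ := by nlinarith
    nlinarith [mul_le_mul_of_nonneg_right ih (sq_nonneg ρ),
      mul_le_mul_of_nonneg_left h1s hsq]

private lemma min_principle (c μ : ℝ) (hc : 0 < c) (hμ : 0 < μ)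
    (w V g : ℕ → ℝ) (hV : ∀ n : ℕ, 1 ≤ n → 0 ≤ V n) (hg : ∀ n : ℕ, 1 ≤ n → 0 ≤ g n)
    (hlb : ∃ M : ℝ, ∀ n : ℕ, 1 ≤ n → -M ≤ w n)
    (heq : ∀ n : ℕ, 1 ≤ n →
      c * ((2 * w n - w (n + 1) - (if n = 1 then 0 else w (n - 1))) + μ * w n) + V n * w n
        = g n) :
    ∀ n : ℕ, 1 ≤ n → 0 ≤ w n := by
  by_contra hcon
  push_neg at hcon
  obtain ⟨N, hN1, hNneg⟩ := hcon
  obtain ⟨M, hM⟩ := hlb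
  have hSne : (w '' {n : ℕ | 1 ≤ n}).Nonempty := ⟨w N, ⟨N, hN1, rfl⟩⟩
  have hSbdd : BddBelow (w '' {n : ℕ | 1 ≤ n}) := ⟨-M, by rintro x ⟨n, hn, rfl⟩; exact hM n hn⟩
  set m := sInf (w '' {n : ℕ | 1 ≤ n}) with hm
  have hmle : ∀ n : ℕ, 1 ≤ n → m ≤ w n := fun n hn => csInf_le hSbdd ⟨n, hn, rfl⟩
  have hmneg : m < 0 := lt_of_le_of_lt (hmle N hN1) hNneg
  have h2μ : (0:ℝ) < 2 * (2 + μ) := by linarith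
  set ε := -(μ * m) / (2 * (2 + μ)) with hε
  have hεpos : 0 < ε := by
    apply div_pos
    · nlinarith
    · exact h2μ
  have key : ε * (2 * (2 + μ)) = -(μ * m) := by
    rw [hε]; field_simp
  obtain ⟨x, hxS, hxlt⟩ := Real.lt_sInf_add_pos hSne hεpos
  obtain ⟨n, hn1, rfl⟩ := hxS
  rw [← hm] at hxlt
  have hn1' : 1 ≤ n := hn1
  have h1 := heq n hn1'
  have h2 : m ≤ w (n + 1) := hmle (n + 1) (by omega)
  have h3 : m ≤ (if n = 1 then (0:ℝ) else w (n - 1)) := by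
    split_ifs with hif
    · linarith
    · exact hmle (n - 1) (by omega)
  have hεm : m + ε < 0 := by nlinarith [key]
  have hwneg : w n < 0 := lt_of_lt_of_le hxlt hεm.le
  have hVw : V n * w n ≤ 0 := mul_nonpos_of_nonneg_of_nonpos (hV n hn1') hwneg.le
  have hstuff : (2 * w n - w (n + 1) - (if n = 1 then 0 else w (n - 1))) + μ * w n
      < μ * m / 2 := by
    have hmul := mul_lt_mul_of_pos_left hxlt (show (0:ℝ) < 2 + μ by linarith)
    nlinarith [key, h2, h3]
  have hcs := mul_lt_mul_of_pos_left hstuff hc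
  have hneg : 0 < c * μ * (-m) := mul_pos (mul_pos hc hμ) (by linarith)
  linarith [h1, hVw, hg n hn1', hcs, hneg]

end helpers

set_option maxHeartbeats 1000000 in
/-- Second-difference estimate for the bounded solution `a` of `Ha = f`:
`|a(n+1) + a(n-1) - 2a(n)| ≤ 2(1-ρ)²(βn + r)ρ^{n-1} + 6β²ρⁿ/γ` for all `n ≥ 2`. -/
theorem stmt_18 (ρ β γ r μ : ℝ) (hρ0 : 0 < ρ) (hρ1 : ρ < 1) (hβ : 0 < β)
    (hγ : 0 < γ) (hr : 0 < r) (hrel : (ρ⁻¹ - ρ) / β = 1 / r) (hμ : μ = ρ + ρ⁻¹ - 2)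
    (a : ℕ → ℝ) (hbdd : ∃ M : ℝ, ∀ n, |a n| ≤ M)
    (ha : ∀ n, 1 ≤ n →
      γ / β ^ 2 *
          ((2 * a n - a (n + 1) - (if n = 1 then 0 else a (n - 1))) + μ * a n)
        + (1 - ρ ^ (2 * n)) / (β * (n : ℝ) * (1 + ρ ^ (2 * n))) * a n
      = 2 * ρ ^ n / (1 + ρ ^ (2 * n))) :
    ∀ n : ℕ, 2 ≤ n →
      |a (n + 1) + a (n - 1) - 2 * a n|
        ≤ 2 * (1 - ρ) ^ 2 * (β * (n : ℝ) + r) * ρ ^ (n - 1) + 6 * β ^ 2 * ρ ^ n / γ := by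
  obtain ⟨M, hM⟩ := hbdd
  have hβ2 : (0:ℝ) < β ^ 2 := by positivity
  have hc : 0 < γ / β ^ 2 := by positivity
  have hμρ : μ * ρ = (1 - ρ) ^ 2 := by rw [hμ]; field_simp; ring
  have hμpos : 0 < μ := by nlinarith [hμρ, pow_pos (show (0:ℝ) < 1 - ρ by linarith) 2]
  have hrβ : r * (1 - ρ ^ 2) = β * ρ := by
    field_simp at hrel
    linear_combination hrel
  have hpow1 : ∀ n : ℕ, ρ ^ (2 * n) ≤ 1 := fun n => pow_le_one₀ hρ0.le hρ1.le
  have hpow0 : ∀ n : ℕ, 0 < ρ ^ (2 * n) := fun n => pow_pos hρ0 _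
  have hVnn : ∀ n : ℕ, 1 ≤ n →
      0 ≤ (1 - ρ ^ (2 * n)) / (β * (n : ℝ) * (1 + ρ ^ (2 * n))) := by
    intro n hn
    apply div_nonneg
    · linarith [hpow1 n]
    · positivity
  -- Step A : a is nonnegative
  have hA : ∀ n : ℕ, 1 ≤ n → 0 ≤ a n := by
    refine min_principle (γ / β ^ 2) μ hc hμpos a
      (fun n => (1 - ρ ^ (2 * n)) / (β * (n : ℝ) * (1 + ρ ^ (2 * n))))
      (fun n => 2 * ρ ^ n / (1 + ρ ^ (2 * n)))
      hVnn (fun n _ => by positivity)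
      ⟨M, fun n _ => (abs_le.mp (hM n)).1⟩
      (fun n hn => ha n hn)
  -- key geometric inequality
  have hkey : ∀ n : ℕ, β * (n : ℝ) * ρ ^ (2 * n) ≤ r * (1 - ρ ^ (2 * n)) := by
    intro n
    have hg := geom_aux ρ hρ0 hρ1 n
    have h5 : ρ * (β * (n : ℝ) * ρ ^ (2 * n)) ≤ ρ * (r * (1 - ρ ^ (2 * n))) := by
      calc ρ * (β * (n : ℝ) * ρ ^ (2 * n)) = ((n : ℝ) * (1 - ρ ^ 2) * ρ ^ (2 * n)) * r := by
            linear_combination (-((n : ℝ) * ρ ^ (2 * n))) * hrβ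
        _ ≤ (ρ * (1 - ρ ^ (2 * n))) * r := mul_le_mul_of_nonneg_right hg hr.le
        _ = ρ * (r * (1 - ρ ^ (2 * n))) := by ring
    exact le_of_mul_le_mul_left h5 hρ0
  -- V·b - f ≥ 0
  have hVbf : ∀ n : ℕ, 1 ≤ n →
      0 ≤ (1 - ρ ^ (2 * n)) / (β * (n : ℝ) * (1 + ρ ^ (2 * n))) * (2 * (β * (n : ℝ) + r) * ρ ^ n)
        - 2 * ρ ^ n / (1 + ρ ^ (2 * n)) := by
    intro n hn
    have hn' : (0:ℝ) < (n : ℝ) := by exact_mod_cast hn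
    have hden : (0:ℝ) < β * (n : ℝ) * (1 + ρ ^ (2 * n)) := by positivity
    have heqq : (1 - ρ ^ (2 * n)) / (β * (n : ℝ) * (1 + ρ ^ (2 * n))) * (2 * (β * (n : ℝ) + r) * ρ ^ n)
        - 2 * ρ ^ n / (1 + ρ ^ (2 * n))
        = 2 * ρ ^ n * (r * (1 - ρ ^ (2 * n)) - β * (n : ℝ) * ρ ^ (2 * n))
          / (β * (n : ℝ) * (1 + ρ ^ (2 * n))) := by
      field_simp
      ring
    rw [heqq]
    apply div_nonneg _ hden.le
    have hρn : (0:ℝ) < ρ ^ n := pow_pos hρ0 n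
    nlinarith [hkey n]
  -- Step B : a n ≤ 2(βn+r)ρ^n
  have hB : ∀ n : ℕ, 1 ≤ n → 0 ≤ 2 * (β * (n : ℝ) + r) * ρ ^ n - a n := by
    refine min_principle (γ / β ^ 2) μ hc hμpos
      (fun n => 2 * (β * (n : ℝ) + r) * ρ ^ n - a n)
      (fun n => (1 - ρ ^ (2 * n)) / (β * (n : ℝ) * (1 + ρ ^ (2 * n))))
      (fun n => γ / β ^ 2 *
          ((2 * (2 * (β * (n : ℝ) + r) * ρ ^ n) - 2 * (β * ((n : ℝ) + 1) + r) * ρ ^ (n + 1)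
            - (if n = 1 then 0 else 2 * (β * ((n : ℝ) - 1) + r) * ρ ^ (n - 1)))
            + μ * (2 * (β * (n : ℝ) + r) * ρ ^ n))
        + (1 - ρ ^ (2 * n)) / (β * (n : ℝ) * (1 + ρ ^ (2 * n))) * (2 * (β * (n : ℝ) + r) * ρ ^ n)
        - 2 * ρ ^ n / (1 + ρ ^ (2 * n)))
      hVnn ?_ ?_ ?_
    · -- g ≥ 0
      intro n hn
      have hVbfn := hVbf n hn
      by_cases h1 : n = 1
      · subst h1
        simp only [reduceIte]
        push_cast
        push_cast at hVbfn
        have hDnn : 0 ≤ (2 * (2 * (β * 1 + r) * ρ ^ 1) - 2 * (β * (1 + 1) + r) * ρ ^ (1 + 1)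
            - 0) + μ * (2 * (β * 1 + r) * ρ ^ 1) := by
          have e : (2 * (2 * (β * 1 + r) * ρ ^ 1) - 2 * (β * (1 + 1) + r) * ρ ^ (1 + 1)
              - 0) + μ * (2 * (β * 1 + r) * ρ ^ 1)
              = 2 * β * (1 - ρ ^ 2) + 2 * r + (μ * ρ - (1 - ρ) ^ 2) * (2 * (β + r)) := by
            ring
          rw [e, hμρ]
          nlinarith
        linarith [mul_nonneg hc.le hDnn, hVbfn]
      · obtain ⟨k, rfl⟩ : ∃ k, n = k + 2 := ⟨n - 2, by omega⟩
        simp only [if_neg h1, show k + 2 - 1 = k + 1 from by omega]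
        push_cast
        push_cast at hVbfn
        have hDnn : 0 ≤ (2 * (2 * (β * ((k:ℝ) + 2) + r) * ρ ^ (k + 2))
            - 2 * (β * (((k:ℝ) + 2) + 1) + r) * ρ ^ (k + 2 + 1)
            - 2 * (β * (((k:ℝ) + 2) - 1) + r) * ρ ^ (k + 1))
            + μ * (2 * (β * ((k:ℝ) + 2) + r) * ρ ^ (k + 2)) := by
          have e : ρ * ((2 * (2 * (β * ((k:ℝ) + 2) + r) * ρ ^ (k + 2))
              - 2 * (β * (((k:ℝ) + 2) + 1) + r) * ρ ^ (k + 2 + 1)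
              - 2 * (β * (((k:ℝ) + 2) - 1) + r) * ρ ^ (k + 1))
              + μ * (2 * (β * ((k:ℝ) + 2) + r) * ρ ^ (k + 2)))
              = 2 * β * (1 - ρ ^ 2) * ρ ^ (k + 2)
                + (μ * ρ - (1 - ρ) ^ 2) * (2 * (β * ((k:ℝ) + 2) + r) * ρ ^ (k + 2)) := by
            ring
          have e2 : ρ * ((2 * (2 * (β * ((k:ℝ) + 2) + r) * ρ ^ (k + 2))
              - 2 * (β * (((k:ℝ) + 2) + 1) + r) * ρ ^ (k + 2 + 1)
              - 2 * (β * (((k:ℝ) + 2) - 1) + r) * ρ ^ (k + 1))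
              + μ * (2 * (β * ((k:ℝ) + 2) + r) * ρ ^ (k + 2)))
              = 2 * β * (1 - ρ ^ 2) * ρ ^ (k + 2) := by
            rw [e, hμρ]; ring
          have h3 : ρ * 0 ≤ ρ * ((2 * (2 * (β * ((k:ℝ) + 2) + r) * ρ ^ (k + 2))
              - 2 * (β * (((k:ℝ) + 2) + 1) + r) * ρ ^ (k + 2 + 1)
              - 2 * (β * (((k:ℝ) + 2) - 1) + r) * ρ ^ (k + 1))
              + μ * (2 * (β * ((k:ℝ) + 2) + r) * ρ ^ (k + 2))) := by
            rw [mul_zero, e2]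
            have : (0:ℝ) ≤ 1 - ρ ^ 2 := by nlinarith
            positivity
          exact le_of_mul_le_mul_left h3 hρ0
        linarith [mul_nonneg hc.le hDnn, hVbfn]
    · -- lower bound
      refine ⟨M, fun n _ => ?_⟩
      have hb0 : (0:ℝ) ≤ 2 * (β * (n : ℝ) + r) * ρ ^ n := by positivity
      linarith [(abs_le.mp (hM n)).2]
    · -- equation
      intro n hn
      have h := ha n hn
      by_cases h1 : n = 1
      · subst h1
        simp only [reduceIte] at h ⊢
        push_cast
        linear_combination -h
      · simp only [if_neg h1] at h ⊢
        push_cast [Nat.cast_sub hn]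
        linear_combination -h
  -- Final estimate
  intro n hn2
  obtain ⟨k, rfl⟩ : ∃ k, n = k + 2 := ⟨n - 2, by omega⟩
  have h := ha (k + 2) (by omega)
  simp only [if_neg (show ¬ k + 2 = 1 by omega), show k + 2 - 1 = k + 1 from by omega] at h ⊢
  push_cast at h ⊢
  have hb := hB (k + 2) (by omega)
  push_cast at hb
  have ha2 := hA (k + 2) (by omega)
  have hVn0 := hVnn (k + 2) (by omega)
  push_cast at hVn0
  have hden : (0:ℝ) < β * ((k:ℝ) + 2) * (1 + ρ ^ (2 * (k + 2))) := by positivity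
  have hρn : (0:ℝ) < ρ ^ (k + 2) := pow_pos hρ0 _
  have ht : (0:ℝ) < β ^ 2 / γ := by positivity
  -- Bernoulli-type bound
  have hBer : 1 - ρ ^ (2 * (k + 2)) ≤ ((k:ℝ) + 2) * (1 - ρ ^ 2) := by
    have h9 := one_add_mul_le_pow (show (-2:ℝ) ≤ ρ ^ 2 - 1 by nlinarith) (k + 2)
    have h10 : (1 + (ρ ^ 2 - 1)) ^ (k + 2) = ρ ^ (2 * (k + 2)) := by
      rw [show (1:ℝ) + (ρ ^ 2 - 1) = ρ ^ 2 by ring, ← pow_mul]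
    rw [h10] at h9
    push_cast at h9
    nlinarith [h9]
  have hrb2 : r * (1 - ρ ^ (2 * (k + 2))) ≤ β * ((k:ℝ) + 2) := by
    nlinarith [mul_le_mul_of_nonneg_left hBer hr.le, hrβ, (by positivity : (0:ℝ) ≤ (k:ℝ)),
      mul_nonneg (mul_nonneg hβ.le (show (0:ℝ) ≤ 1 - ρ by linarith))
        (show (0:ℝ) ≤ (k:ℝ) + 2 by positivity)]
  have hVb4 : (1 - ρ ^ (2 * (k + 2))) / (β * ((k:ℝ) + 2) * (1 + ρ ^ (2 * (k + 2))))
      * (2 * (β * ((k:ℝ) + 2) + r) * ρ ^ (k + 2)) ≤ 4 * ρ ^ (k + 2) := by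
    rw [div_mul_eq_mul_div, div_le_iff₀ hden]
    nlinarith [hrb2, hρn, hpow0 (k + 2), hpow1 (k + 2),
      mul_le_mul_of_nonneg_right hrb2 hρn.le,
      mul_nonneg (mul_nonneg (mul_nonneg hβ.le (show (0:ℝ) ≤ (k:ℝ) + 2 by positivity))
        (hpow0 (k + 2)).le) hρn.le,
      mul_nonneg (mul_nonneg hr.le (hpow0 (k + 2)).le) hρn.le]
  have hF0 : (0:ℝ) ≤ 2 * ρ ^ (k + 2) / (1 + ρ ^ (2 * (k + 2))) := by positivity
  have hF2 : 2 * ρ ^ (k + 2) / (1 + ρ ^ (2 * (k + 2))) ≤ 2 * ρ ^ (k + 2) :=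
    div_le_self (by positivity) (by nlinarith [hpow0 (k + 2)])
  -- rearrange the equation
  have h2 : γ / β ^ 2 * ((2 * a (k + 2) - a (k + 2 + 1) - a (k + 1)) + μ * a (k + 2))
      = 2 * ρ ^ (k + 2) / (1 + ρ ^ (2 * (k + 2)))
        - (1 - ρ ^ (2 * (k + 2))) / (β * ((k:ℝ) + 2) * (1 + ρ ^ (2 * (k + 2)))) * a (k + 2) := by
    linarith [h]
  have hone : β ^ 2 / γ * (γ / β ^ 2) = 1 := by field_simp
  have hX : (2 * a (k + 2) - a (k + 2 + 1) - a (k + 1)) + μ * a (k + 2)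
      = β ^ 2 / γ * (2 * ρ ^ (k + 2) / (1 + ρ ^ (2 * (k + 2)))
        - (1 - ρ ^ (2 * (k + 2))) / (β * ((k:ℝ) + 2) * (1 + ρ ^ (2 * (k + 2)))) * a (k + 2)) := by
    rw [← h2, ← mul_assoc, hone, one_mul]
  -- assemble the bounds
  have hab : a (k + 2) ≤ 2 * (β * ((k:ℝ) + 2) + r) * ρ ^ (k + 2) := by linarith [hb]
  have hμa0 : 0 ≤ μ * a (k + 2) := mul_nonneg hμpos.le ha2
  have hμab : μ * a (k + 2) ≤ μ * (2 * (β * ((k:ℝ) + 2) + r) * ρ ^ (k + 2)) :=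
    mul_le_mul_of_nonneg_left hab hμpos.le
  have hμbA : μ * (2 * (β * ((k:ℝ) + 2) + r) * ρ ^ (k + 2))
      = 2 * (1 - ρ) ^ 2 * (β * ((k:ℝ) + 2) + r) * ρ ^ (k + 1) := by
    linear_combination (2 * (β * ((k:ℝ) + 2) + r) * ρ ^ (k + 1)) * hμρ
  have hVa0 : 0 ≤ (1 - ρ ^ (2 * (k + 2))) / (β * ((k:ℝ) + 2) * (1 + ρ ^ (2 * (k + 2)))) * a (k + 2) :=
    mul_nonneg hVn0 ha2
  have hVaVb : (1 - ρ ^ (2 * (k + 2))) / (β * ((k:ℝ) + 2) * (1 + ρ ^ (2 * (k + 2)))) * a (k + 2)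
      ≤ (1 - ρ ^ (2 * (k + 2))) / (β * ((k:ℝ) + 2) * (1 + ρ ^ (2 * (k + 2))))
        * (2 * (β * ((k:ℝ) + 2) + r) * ρ ^ (k + 2)) :=
    mul_le_mul_of_nonneg_left hab hVn0
  have htVa := mul_le_mul_of_nonneg_left hVaVb ht.le
  have htVb4 := mul_le_mul_of_nonneg_left hVb4 ht.le
  have htF0 := mul_nonneg ht.le hF0
  have htF2 := mul_le_mul_of_nonneg_left hF2 ht.le
  have htVa0 := mul_nonneg ht.le hVa0
  have htρ : 0 ≤ β ^ 2 / γ * ρ ^ (k + 2) := mul_nonneg ht.le hρn.le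
  have hApos : 0 ≤ 2 * (1 - ρ) ^ 2 * (β * ((k:ℝ) + 2) + r) * ρ ^ (k + 1) := by positivity
  rw [show 6 * β ^ 2 * ρ ^ (k + 2) / γ = 6 * (β ^ 2 / γ * ρ ^ (k + 2)) by ring]
  set t := β ^ 2 / γ with htdef
  set Vv := (1 - ρ ^ (2 * (k + 2))) / (β * ((k:ℝ) + 2) * (1 + ρ ^ (2 * (k + 2)))) with hVvdef
  set Fv := 2 * ρ ^ (k + 2) / (1 + ρ ^ (2 * (k + 2))) with hFvdef
  rw [abs_le]
  constructor
  · linarith [hX, hμa0, htVa0, htF2, hApos, htρ]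
  · linarith [hX, hμab, hμbA, htVa, htVb4, htF0, htρ]
end
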